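/- arXiv:2002.06135 — 8 statements merged into one kernel-verified Lean document; each statement's English description precedes it below -/
import Mathlib

section
/- The set zer S = {𝘅 ∈ 𝗫 : 0 ∈ S𝘅} of zeros of the saddle operator S associated with Problem 1 is a closed convex subset of 𝗫. -/
/-!
Statement 1: The set `zer S` of zeros of the saddle operator `S` associated with
Problem 1 is a closed convex subset of `𝗫 = 𝗛 ⊕ 𝗚 ⊕ 𝗚 ⊕ 𝗚`.
-/

open scoped RealInnerProductSpace Pointwise
open Filter Topology

noncomputable section

/-- A set-valued operator is monotone. -/
def IsMonotoneOp {E : Type*} [NormedAddCommGroup E] [InnerProductSpace ℝ E]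
    (A : E → Set E) : Prop :=
  ∀ ⦃x x' y y'⦄, x' ∈ A x → y' ∈ A y → (0:ℝ) ≤ ⟪x - y, x' - y'⟫

/-- A set-valued operator is maximally monotone. -/
def IsMaxMonotoneOp {E : Type*} [NormedAddCommGroup E] [InnerProductSpace ℝ E]
    (A : E → Set E) : Prop :=
  IsMonotoneOp A ∧
    ∀ x x', (∀ y y', y' ∈ A y → (0:ℝ) ≤ ⟪x - y, x' - y'⟫) → x' ∈ A x

/-- A single-valued operator is monotone. -/
def IsMonotoneMap {E : Type*} [NormedAddCommGroup E] [InnerProductSpace ℝ E]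
    (f : E → E) : Prop :=
  ∀ x y, (0:ℝ) ≤ ⟪x - y, f x - f y⟫

/-- `f` is Lipschitz continuous with constant `c`. -/
def IsLipschitzMap {E F : Type*} [NormedAddCommGroup E] [NormedAddCommGroup F]
    (f : E → F) (c : ℝ) : Prop :=
  ∀ x y, ‖f x - f y‖ ≤ c * ‖x - y‖

/-- `f` is cocoercive with constant `α`. -/
def IsCocoercive {E : Type*} [NormedAddCommGroup E] [InnerProductSpace ℝ E]
    (f : E → E) (α : ℝ) : Prop :=
  ∀ x y, α * ‖f x - f y‖ ^ 2 ≤ ⟪x - y, f x - f y⟫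

universe u

variable {I K : Type*}

/-- The family of component spaces of `𝗫 = 𝗛 ⊕ 𝗚 ⊕ 𝗚 ⊕ 𝗚`. -/
def XFam (H : I → Type u) (G : K → Type u) : I ⊕ K ⊕ K ⊕ K → Type u :=
  Sum.elim H (Sum.elim G (Sum.elim G G))

variable {H : I → Type u} {G : K → Type u}

instance [∀ i, NormedAddCommGroup (H i)] [∀ k, NormedAddCommGroup (G k)] :
    ∀ st, NormedAddCommGroup (XFam H G st)
  | Sum.inl i => inferInstanceAs (NormedAddCommGroup (H i))
  | Sum.inr (Sum.inl k) => inferInstanceAs (NormedAddCommGroup (G k))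
  | Sum.inr (Sum.inr (Sum.inl k)) => inferInstanceAs (NormedAddCommGroup (G k))
  | Sum.inr (Sum.inr (Sum.inr k)) => inferInstanceAs (NormedAddCommGroup (G k))

instance [∀ i, NormedAddCommGroup (H i)] [∀ k, NormedAddCommGroup (G k)]
    [∀ i, InnerProductSpace ℝ (H i)] [∀ k, InnerProductSpace ℝ (G k)] :
    ∀ st, InnerProductSpace ℝ (XFam H G st)
  | Sum.inl i => inferInstanceAs (InnerProductSpace ℝ (H i))
  | Sum.inr (Sum.inl k) => inferInstanceAs (InnerProductSpace ℝ (G k))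
  | Sum.inr (Sum.inr (Sum.inl k)) => inferInstanceAs (InnerProductSpace ℝ (G k))
  | Sum.inr (Sum.inr (Sum.inr k)) => inferInstanceAs (InnerProductSpace ℝ (G k))

def Xx (w : PiLp 2 (XFam H G)) [∀ i, NormedAddCommGroup (H i)]
    [∀ k, NormedAddCommGroup (G k)] : PiLp 2 H := WithLp.toLp 2 (fun i => w (Sum.inl i))

def Xy (w : PiLp 2 (XFam H G)) [∀ i, NormedAddCommGroup (H i)]
    [∀ k, NormedAddCommGroup (G k)] : PiLp 2 G := WithLp.toLp 2 (fun k => w (Sum.inr (Sum.inl k)))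

def Xz (w : PiLp 2 (XFam H G)) [∀ i, NormedAddCommGroup (H i)]
    [∀ k, NormedAddCommGroup (G k)] : PiLp 2 G := WithLp.toLp 2 (fun k => w (Sum.inr (Sum.inr (Sum.inl k))))

def Xv (w : PiLp 2 (XFam H G)) [∀ i, NormedAddCommGroup (H i)]
    [∀ k, NormedAddCommGroup (G k)] : PiLp 2 G := WithLp.toLp 2 (fun k => w (Sum.inr (Sum.inr (Sum.inr k))))

/-- The saddle operator `S` of Problem 1, acting on `𝗫 = 𝗛 ⊕ 𝗚 ⊕ 𝗚 ⊕ 𝗚`,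
realized as `PiLp 2 (XFam H G)`.  A point `w' = (a*, b*, c*, d)` belongs to `S w`,
`w = (x, y, z, v*)`, iff
`aᵢ* ∈ -sᵢ* + Aᵢxᵢ + Cᵢxᵢ + Qᵢxᵢ + Rᵢx + Σₖ Lₖᵢ* vₖ*`,
`bₖ* ∈ Bₖᵐyₖ + Bₖᶜyₖ + Bₖˡyₖ - vₖ*`, `cₖ* ∈ Dₖᵐzₖ + Dₖᶜzₖ + Dₖˡzₖ - vₖ*`, and
`dₖ = rₖ + yₖ + zₖ - Σᵢ Lₖᵢxᵢ`. -/
def SaddleOp [Fintype I] [Fintype K]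
    [∀ i, NormedAddCommGroup (H i)] [∀ i, InnerProductSpace ℝ (H i)]
    [∀ i, CompleteSpace (H i)]
    [∀ k, NormedAddCommGroup (G k)] [∀ k, InnerProductSpace ℝ (G k)]
    [∀ k, CompleteSpace (G k)]
    (s : ∀ i, H i) (r : ∀ k, G k)
    (A : ∀ i, H i → Set (H i)) (C Q : ∀ i, H i → H i) (R : ∀ i, PiLp 2 H → H i)
    (Bm : ∀ k, G k → Set (G k)) (Bc Bl : ∀ k, G k → G k)
    (Dm : ∀ k, G k → Set (G k)) (Dc Dl : ∀ k, G k → G k)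
    (L : ∀ k i, H i →L[ℝ] G k) :
    PiLp 2 (XFam H G) → Set (PiLp 2 (XFam H G)) := fun w =>
  {w' |
    (∀ i, Xx w' i + s i - C i (Xx w i) - Q i (Xx w i) - R i (Xx w)
        - ∑ k, ContinuousLinearMap.adjoint (L k i) (Xv w k) ∈ A i (Xx w i)) ∧
    (∀ k, Xy w' k - Bc k (Xy w k) - Bl k (Xy w k) + Xv w k ∈ Bm k (Xy w k)) ∧
    (∀ k, Xz w' k - Dc k (Xz w k) - Dl k (Xz w k) + Xv w k ∈ Dm k (Xz w k)) ∧
    (∀ k, Xv w' k = r k + Xy w k + Xz w k - ∑ i, L k i (Xx w i))}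


section AuxMono
variable {E : Type*} [NormedAddCommGroup E] [InnerProductSpace ℝ E]


lemma inner_comb_identity (a b : ℝ) (hab : a + b = 1) (x0 x1 p x0' x1' p' : E) :
    ⟪(a•x0+b•x1) - p, (a•x0'+b•x1') - p'⟫
      = a*⟪x0-p,x0'-p'⟫ + b*⟪x1-p,x1'-p'⟫ - a*b*⟪x0-x1,x0'-x1'⟫ := by
  have hb : b = 1 - a := by linarith
  subst hb
  simp only [inner_sub_left, inner_sub_right, inner_add_left, inner_add_right,
    real_inner_smul_left, real_inner_smul_right]
  ring

lemma IsLipschitzMap.continuous' {F : Type*} [NormedAddCommGroup F] {f : E → F} {c : ℝ}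
    (h : IsLipschitzMap f c) : Continuous f := by
  refine (LipschitzWith.of_dist_le_mul (K := c.toNNReal) fun x y => ?_).continuous
  rw [dist_eq_norm, dist_eq_norm]
  exact (h x y).trans (mul_le_mul_of_nonneg_right (Real.le_coe_toNNReal c) (norm_nonneg _))

lemma IsCocoercive.monotone {f : E → E} {α : ℝ} (hα : 0 < α) (h : IsCocoercive f α) :
    IsMonotoneMap f := fun x y =>
  le_trans (by positivity) (h x y)

lemma IsCocoercive.lipschitz {f : E → E} {α : ℝ} (hα : 0 < α) (h : IsCocoercive f α) :
    IsLipschitzMap f (1/α) := by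
  intro x y
  rcases eq_or_lt_of_le (norm_nonneg (f x - f y)) with h0 | h0
  · rw [← h0]; positivity
  · have h1 := (h x y).trans (real_inner_le_norm _ _)
    rw [div_mul_eq_mul_div, le_div_iff₀ hα]
    nlinarith
lemma maxMonotone_comb {A : E → Set E} (hA : IsMaxMonotoneOp A) {x0 x1 x0' x1' : E}
    (h0 : x0' ∈ A x0) (h1 : x1' ∈ A x1) (hz : ⟪x0 - x1, x0' - x1'⟫ = 0)
    {a b : ℝ} (ha : 0 ≤ a) (hb : 0 ≤ b) (hab : a + b = 1) :
    a•x0' + b•x1' ∈ A (a•x0 + b•x1) := by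
  apply hA.2
  intro p p' hp
  rw [inner_comb_identity a b hab, hz]
  have h0' := hA.1 h0 hp
  have h1' := hA.1 h1 hp
  nlinarith

lemma continuous_monotone_max {f : E → E} (hm : IsMonotoneMap f)
    (hf : Continuous f) {w w' : E} (h : ∀ p, (0:ℝ) ≤ ⟪w - p, w' - f p⟫) :
    w' = f w := by
  have key : ∀ h0 : E, (0:ℝ) ≤ ⟪h0, w' - f w⟫ := by
    intro h0
    have step : ∀ t : ℝ, 0 < t → (0:ℝ) ≤ ⟪h0, w' - f (w - t • h0)⟫ := by
      intro t ht
      have h1 := h (w - t • h0)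
      have h2 : w - (w - t • h0) = t • h0 := by abel
      rw [h2, real_inner_smul_left] at h1
      exact nonneg_of_mul_nonneg_right h1 ht
    have hc : Continuous fun t : ℝ => ⟪h0, w' - f (w - t • h0)⟫ := by
      refine Continuous.inner continuous_const (continuous_const.sub (hf.comp ?_))
      exact continuous_const.sub (continuous_id.smul continuous_const)
    have h9 : Filter.Tendsto (fun t : ℝ => ⟪h0, w' - f (w - t • h0)⟫)
        (nhdsWithin (0:ℝ) (Set.Ioi 0)) (nhds ⟪h0, w' - f w⟫) := by
      have h10 := hc.tendsto 0
      simp only [zero_smul, sub_zero] at h10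
      exact h10.mono_left nhdsWithin_le_nhds
    refine ge_of_tendsto h9 ?_
    filter_upwards [self_mem_nhdsWithin] with t ht
    exact step t ht
  have hkey := key (-(w' - f w))
  rw [inner_neg_left] at hkey
  have h2 : ⟪w' - f w, w' - f w⟫ = 0 := le_antisymm (by linarith) real_inner_self_nonneg
  have h3 := inner_self_eq_zero.mp h2
  rwa [sub_eq_zero] at h3

lemma mono_map_comb {f : E → E} (hm : IsMonotoneMap f) (hf : Continuous f)
    {x0 x1 : E} (hz : ⟪x0 - x1, f x0 - f x1⟫ = 0)
    {a b : ℝ} (ha : 0 ≤ a) (hb : 0 ≤ b) (hab : a + b = 1) :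
    f (a•x0 + b•x1) = a • f x0 + b • f x1 := by
  refine (continuous_monotone_max hm hf fun p => ?_).symm
  rw [inner_comb_identity a b hab, hz]
  have h0 := hm x0 p
  have h1 := hm x1 p
  nlinarith

end AuxMono

section ApplyLemmas
variable [∀ i, NormedAddCommGroup (H i)] [∀ k, NormedAddCommGroup (G k)]
variable [∀ i, InnerProductSpace ℝ (H i)] [∀ k, InnerProductSpace ℝ (G k)]

lemma Xx_zero_apply (i : I) : Xx (0 : PiLp 2 (XFam H G)) i = 0 := rfl
lemma Xy_zero_apply (k : K) : Xy (0 : PiLp 2 (XFam H G)) k = 0 := rfl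
lemma Xz_zero_apply (k : K) : Xz (0 : PiLp 2 (XFam H G)) k = 0 := rfl
lemma Xv_zero_apply (k : K) : Xv (0 : PiLp 2 (XFam H G)) k = 0 := rfl

lemma Xx_comb (a b : ℝ) (w0 w1 : PiLp 2 (XFam H G)) :
    Xx (a • w0 + b • w1) = a • Xx w0 + b • Xx w1 := rfl
lemma Xx_comb_apply (a b : ℝ) (w0 w1 : PiLp 2 (XFam H G)) (i : I) :
    Xx (a • w0 + b • w1) i = a • Xx w0 i + b • Xx w1 i := rfl
lemma Xy_comb_apply (a b : ℝ) (w0 w1 : PiLp 2 (XFam H G)) (k : K) :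
    Xy (a • w0 + b • w1) k = a • Xy w0 k + b • Xy w1 k := rfl
lemma Xz_comb_apply (a b : ℝ) (w0 w1 : PiLp 2 (XFam H G)) (k : K) :
    Xz (a • w0 + b • w1) k = a • Xz w0 k + b • Xz w1 k := rfl
lemma Xv_comb_apply (a b : ℝ) (w0 w1 : PiLp 2 (XFam H G)) (k : K) :
    Xv (a • w0 + b • w1) k = a • Xv w0 k + b • Xv w1 k := rfl

end ApplyLemmas

set_option maxHeartbeats 1000000

/-- In the setting of Problem 1, the set of zeros of the saddle
operator `S` is a closed convex subset of `𝗫`. -/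
theorem zer_saddleOp_isClosed_convex
    [Fintype I] [Fintype K] [Nonempty I] [Nonempty K]
    [∀ i, NormedAddCommGroup (H i)] [∀ i, InnerProductSpace ℝ (H i)]
    [∀ i, CompleteSpace (H i)]
    [∀ k, NormedAddCommGroup (G k)] [∀ k, InnerProductSpace ℝ (G k)]
    [∀ k, CompleteSpace (G k)]
    (s : ∀ i, H i) (r : ∀ k, G k)
    (A : ∀ i, H i → Set (H i)) (hA : ∀ i, IsMaxMonotoneOp (A i))
    (C : ∀ i, H i → H i) (αc : I → ℝ) (hαc : ∀ i, 0 < αc i)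
    (hC : ∀ i, IsCocoercive (C i) (αc i))
    (Q : ∀ i, H i → H i) (αl : I → ℝ) (hαl : ∀ i, 0 ≤ αl i)
    (hQm : ∀ i, IsMonotoneMap (Q i)) (hQl : ∀ i, IsLipschitzMap (Q i) (αl i))
    (R : ∀ i, PiLp 2 H → H i) (χ : ℝ) (hχ : 0 ≤ χ)
    (hRm : IsMonotoneMap (fun x : PiLp 2 H => (WithLp.toLp 2 (fun i => R i x) : PiLp 2 H)))
    (hRl : IsLipschitzMap (fun x : PiLp 2 H => (WithLp.toLp 2 (fun i => R i x) : PiLp 2 H)) χ)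
    (Bm : ∀ k, G k → Set (G k)) (hBm : ∀ k, IsMaxMonotoneOp (Bm k))
    (Bc : ∀ k, G k → G k) (βc : K → ℝ) (hβc : ∀ k, 0 < βc k)
    (hBc : ∀ k, IsCocoercive (Bc k) (βc k))
    (Bl : ∀ k, G k → G k) (βl : K → ℝ) (hβl : ∀ k, 0 ≤ βl k)
    (hBlm : ∀ k, IsMonotoneMap (Bl k)) (hBll : ∀ k, IsLipschitzMap (Bl k) (βl k))
    (Dm : ∀ k, G k → Set (G k)) (hDm : ∀ k, IsMaxMonotoneOp (Dm k))
    (Dc : ∀ k, G k → G k) (δc : K → ℝ) (hδc : ∀ k, 0 < δc k)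
    (hDc : ∀ k, IsCocoercive (Dc k) (δc k))
    (Dl : ∀ k, G k → G k) (δl : K → ℝ) (hδl : ∀ k, 0 ≤ δl k)
    (hDlm : ∀ k, IsMonotoneMap (Dl k)) (hDll : ∀ k, IsLipschitzMap (Dl k) (δl k))
    (L : ∀ k i, H i →L[ℝ] G k) :
    IsClosed {w : PiLp 2 (XFam H G) | 0 ∈ SaddleOp s r A C Q R Bm Bc Bl Dm Dc Dl L w} ∧
    Convex ℝ {w : PiLp 2 (XFam H G) | 0 ∈ SaddleOp s r A C Q R Bm Bc Bl Dm Dc Dl L w} := by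
  classical
  -- membership characterization
  have hmem : ∀ w : PiLp 2 (XFam H G),
      0 ∈ SaddleOp s r A C Q R Bm Bc Bl Dm Dc Dl L w ↔
      ((∀ i, s i - C i (Xx w i) - Q i (Xx w i) - R i (Xx w)
          - ∑ k, ContinuousLinearMap.adjoint (L k i) (Xv w k) ∈ A i (Xx w i)) ∧
       (∀ k, -Bc k (Xy w k) - Bl k (Xy w k) + Xv w k ∈ Bm k (Xy w k)) ∧
       (∀ k, -Dc k (Xz w k) - Dl k (Xz w k) + Xv w k ∈ Dm k (Xz w k)) ∧
       (∀ k, (0 : G k) = r k + Xy w k + Xz w k - ∑ i, L k i (Xx w i))) := by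
    intro w
    simp only [SaddleOp, Set.mem_setOf_eq, Xx_zero_apply, Xy_zero_apply, Xz_zero_apply,
      Xv_zero_apply, zero_add, zero_sub]
  -- continuity facts
  have hcx : ∀ i, Continuous fun w : PiLp 2 (XFam H G) => Xx w i := fun i =>
    (continuous_apply (Sum.inl i)).comp (PiLp.continuous_ofLp _ _)
  have hcy : ∀ k, Continuous fun w : PiLp 2 (XFam H G) => Xy w k := fun k =>
    (continuous_apply (Sum.inr (Sum.inl k))).comp (PiLp.continuous_ofLp _ _)
  have hcz : ∀ k, Continuous fun w : PiLp 2 (XFam H G) => Xz w k := fun k =>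
    (continuous_apply (Sum.inr (Sum.inr (Sum.inl k)))).comp (PiLp.continuous_ofLp _ _)
  have hcv : ∀ k, Continuous fun w : PiLp 2 (XFam H G) => Xv w k := fun k =>
    (continuous_apply (Sum.inr (Sum.inr (Sum.inr k)))).comp (PiLp.continuous_ofLp _ _)
  have hcX : Continuous fun w : PiLp 2 (XFam H G) => Xx w :=
    (PiLp.continuous_toLp 2 H).comp (continuous_pi fun i => hcx i)
  have hcRi : ∀ i, Continuous fun w : PiLp 2 (XFam H G) => R i (Xx w) := fun i =>
    (continuous_apply i).comp ((PiLp.continuous_ofLp 2 H).comp (hRl.continuous'.comp hcX))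
  have hcPhi : ∀ i, Continuous fun w : PiLp 2 (XFam H G) =>
      s i - C i (Xx w i) - Q i (Xx w i) - R i (Xx w)
        - ∑ k, ContinuousLinearMap.adjoint (L k i) (Xv w k) := by
    intro i
    refine ((((continuous_const.sub
      ((((hC i).lipschitz (hαc i)).continuous').comp (hcx i))).sub
      (((hQl i).continuous').comp (hcx i))).sub (hcRi i)).sub ?_)
    exact continuous_finset_sum _ fun k _ =>
      (ContinuousLinearMap.adjoint (L k i)).continuous.comp (hcv k)
  have hcPsiB : ∀ k, Continuous fun w : PiLp 2 (XFam H G) =>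
      -Bc k (Xy w k) - Bl k (Xy w k) + Xv w k := fun k =>
    (((((hBc k).lipschitz (hβc k)).continuous').comp (hcy k)).neg.sub
      (((hBll k).continuous').comp (hcy k))).add (hcv k)
  have hcPsiD : ∀ k, Continuous fun w : PiLp 2 (XFam H G) =>
      -Dc k (Xz w k) - Dl k (Xz w k) + Xv w k := fun k =>
    (((((hDc k).lipschitz (hδc k)).continuous').comp (hcz k)).neg.sub
      (((hDll k).continuous').comp (hcz k))).add (hcv k)
  constructor
  · -- closedness
    have hZeq : {w : PiLp 2 (XFam H G) | 0 ∈ SaddleOp s r A C Q R Bm Bc Bl Dm Dc Dl L w} =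
        (⋂ i, ⋂ p, ⋂ p', ⋂ (_ : p' ∈ A i p),
          {w : PiLp 2 (XFam H G) | 0 ≤ ⟪Xx w i - p,
            (s i - C i (Xx w i) - Q i (Xx w i) - R i (Xx w)
              - ∑ k, ContinuousLinearMap.adjoint (L k i) (Xv w k)) - p'⟫}) ∩
        ((⋂ k, ⋂ p, ⋂ p', ⋂ (_ : p' ∈ Bm k p),
          {w : PiLp 2 (XFam H G) | 0 ≤ ⟪Xy w k - p,
            (-Bc k (Xy w k) - Bl k (Xy w k) + Xv w k) - p'⟫}) ∩
        ((⋂ k, ⋂ p, ⋂ p', ⋂ (_ : p' ∈ Dm k p),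
          {w : PiLp 2 (XFam H G) | 0 ≤ ⟪Xz w k - p,
            (-Dc k (Xz w k) - Dl k (Xz w k) + Xv w k) - p'⟫}) ∩
        (⋂ k, {w : PiLp 2 (XFam H G) |
          (0 : G k) = r k + Xy w k + Xz w k - ∑ i, L k i (Xx w i)}))) := by
      ext w
      simp only [Set.mem_setOf_eq, Set.mem_inter_iff, Set.mem_iInter]
      rw [hmem w]
      constructor
      · rintro ⟨h1, h2, h3, h4⟩
        exact ⟨fun i p p' hp => (hA i).1 (h1 i) hp,
          fun k p p' hp => (hBm k).1 (h2 k) hp,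
          fun k p p' hp => (hDm k).1 (h3 k) hp, h4⟩
      · rintro ⟨h1, h2, h3, h4⟩
        exact ⟨fun i => (hA i).2 _ _ (fun p p' hp => h1 i p p' hp),
          fun k => (hBm k).2 _ _ (fun p p' hp => h2 k p p' hp),
          fun k => (hDm k).2 _ _ (fun p p' hp => h3 k p p' hp), h4⟩
    rw [hZeq]
    refine IsClosed.inter ?_ (IsClosed.inter ?_ (IsClosed.inter ?_ ?_))
    · refine isClosed_iInter fun i => isClosed_iInter fun p => isClosed_iInter fun p' =>
        isClosed_iInter fun _ => isClosed_le continuous_const ?_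
      exact Continuous.inner ((hcx i).sub continuous_const) ((hcPhi i).sub continuous_const)
    · refine isClosed_iInter fun k => isClosed_iInter fun p => isClosed_iInter fun p' =>
        isClosed_iInter fun _ => isClosed_le continuous_const ?_
      exact Continuous.inner ((hcy k).sub continuous_const) ((hcPsiB k).sub continuous_const)
    · refine isClosed_iInter fun k => isClosed_iInter fun p => isClosed_iInter fun p' =>
        isClosed_iInter fun _ => isClosed_le continuous_const ?_
      exact Continuous.inner ((hcz k).sub continuous_const) ((hcPsiD k).sub continuous_const)
    · refine isClosed_iInter fun k => isClosed_eq continuous_const ?_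
      refine ((continuous_const.add (hcy k)).add (hcz k)).sub ?_
      exact continuous_finset_sum _ fun i _ => (L k i).continuous.comp (hcx i)
  · -- convexity
    intro w0 hw0 w1 hw1 a b ha hb hab
    obtain ⟨h0x, h0y, h0z, h0v⟩ := (hmem w0).mp hw0
    obtain ⟨h1x, h1y, h1z, h1v⟩ := (hmem w1).mp hw1
    -- nonnegativity of the pairing terms
    have tA : ∀ i, (0:ℝ) ≤ ⟪Xx w0 i - Xx w1 i, (s i - C i (Xx w0 i) - Q i (Xx w0 i) - R i (Xx w0) - ∑ k, ContinuousLinearMap.adjoint (L k i) (Xv w0 k)) - (s i - C i (Xx w1 i) - Q i (Xx w1 i) - R i (Xx w1) - ∑ k, ContinuousLinearMap.adjoint (L k i) (Xv w1 k))⟫ := fun i => (hA i).1 (h0x i) (h1x i)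
    have tB : ∀ k, (0:ℝ) ≤ ⟪Xy w0 k - Xy w1 k, (-Bc k (Xy w0 k) - Bl k (Xy w0 k) + Xv w0 k) - (-Bc k (Xy w1 k) - Bl k (Xy w1 k) + Xv w1 k)⟫ := fun k => (hBm k).1 (h0y k) (h1y k)
    have tD : ∀ k, (0:ℝ) ≤ ⟪Xz w0 k - Xz w1 k, (-Dc k (Xz w0 k) - Dl k (Xz w0 k) + Xv w0 k) - (-Dc k (Xz w1 k) - Dl k (Xz w1 k) + Xv w1 k)⟫ := fun k => (hDm k).1 (h0z k) (h1z k)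
    have cC : ∀ i, (0:ℝ) ≤ ⟪Xx w0 i - Xx w1 i, C i (Xx w0 i) - C i (Xx w1 i)⟫ := fun i => ((hC i).monotone (hαc i)) _ _
    have cQ : ∀ i, (0:ℝ) ≤ ⟪Xx w0 i - Xx w1 i, Q i (Xx w0 i) - Q i (Xx w1 i)⟫ := fun i => hQm i _ _
    have cR : (0:ℝ) ≤ ∑ i, ⟪Xx w0 i - Xx w1 i, R i (Xx w0) - R i (Xx w1)⟫ := by
      have h := hRm (Xx w0) (Xx w1)
      rw [PiLp.inner_apply] at h
      simpa only [PiLp.sub_apply] using h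
    have cBc : ∀ k, (0:ℝ) ≤ ⟪Xy w0 k - Xy w1 k, Bc k (Xy w0 k) - Bc k (Xy w1 k)⟫ := fun k => ((hBc k).monotone (hβc k)) _ _
    have cBl : ∀ k, (0:ℝ) ≤ ⟪Xy w0 k - Xy w1 k, Bl k (Xy w0 k) - Bl k (Xy w1 k)⟫ := fun k => hBlm k _ _
    have cDc : ∀ k, (0:ℝ) ≤ ⟪Xz w0 k - Xz w1 k, Dc k (Xz w0 k) - Dc k (Xz w1 k)⟫ := fun k => ((hDc k).monotone (hδc k)) _ _
    have cDl : ∀ k, (0:ℝ) ≤ ⟪Xz w0 k - Xz w1 k, Dl k (Xz w0 k) - Dl k (Xz w1 k)⟫ := fun k => hDlm k _ _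
    -- structural identities
    have hLd : ∀ k, ∑ i, L k i (Xx w0 i - Xx w1 i)
        = (Xy w0 k - Xy w1 k) + (Xz w0 k - Xz w1 k) := by
      intro k
      have e0 : r k + Xy w0 k + Xz w0 k = ∑ i, L k i (Xx w0 i) := sub_eq_zero.mp (h0v k).symm
      have e1 : r k + Xy w1 k + Xz w1 k = ∑ i, L k i (Xx w1 i) := sub_eq_zero.mp (h1v k).symm
      simp only [map_sub, Finset.sum_sub_distrib]
      rw [← e0, ← e1]
      abel
    have htAeq : ∀ i, ⟪Xx w0 i - Xx w1 i, (s i - C i (Xx w0 i) - Q i (Xx w0 i) - R i (Xx w0) - ∑ k, ContinuousLinearMap.adjoint (L k i) (Xv w0 k)) - (s i - C i (Xx w1 i) - Q i (Xx w1 i) - R i (Xx w1) - ∑ k, ContinuousLinearMap.adjoint (L k i) (Xv w1 k))⟫ = -(⟪Xx w0 i - Xx w1 i, C i (Xx w0 i) - C i (Xx w1 i)⟫) - ⟪Xx w0 i - Xx w1 i, Q i (Xx w0 i) - Q i (Xx w1 i)⟫ - ⟪Xx w0 i - Xx w1 i, R i (Xx w0) - R i (Xx w1)⟫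
        - ∑ k, ⟪L k i (Xx w0 i - Xx w1 i), Xv w0 k - Xv w1 k⟫ := by
      intro i
      have hdiff : (s i - C i (Xx w0 i) - Q i (Xx w0 i) - R i (Xx w0) - ∑ k, ContinuousLinearMap.adjoint (L k i) (Xv w0 k)) - (s i - C i (Xx w1 i) - Q i (Xx w1 i) - R i (Xx w1) - ∑ k, ContinuousLinearMap.adjoint (L k i) (Xv w1 k))
          = -(C i (Xx w0 i) - C i (Xx w1 i)) - (Q i (Xx w0 i) - Q i (Xx w1 i))
            - (R i (Xx w0) - R i (Xx w1))
            - ∑ k, ContinuousLinearMap.adjoint (L k i) (Xv w0 k - Xv w1 k) := by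
        simp only [map_sub, Finset.sum_sub_distrib]
        abel
      rw [hdiff]
      simp only [inner_sub_right, inner_neg_right, inner_sum,
        ContinuousLinearMap.adjoint_inner_right]
      try ring
    have hswap : ∑ i, ∑ k, ⟪L k i (Xx w0 i - Xx w1 i), Xv w0 k - Xv w1 k⟫
        = (∑ k, ⟪Xy w0 k - Xy w1 k, Xv w0 k - Xv w1 k⟫) + ∑ k, ⟪Xz w0 k - Xz w1 k, Xv w0 k - Xv w1 k⟫ := by
      rw [Finset.sum_comm, ← Finset.sum_add_distrib]
      refine Finset.sum_congr rfl fun k _ => ?_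
      rw [← sum_inner, hLd k, inner_add_left]
    have h1' : ∑ i, ⟪Xx w0 i - Xx w1 i, (s i - C i (Xx w0 i) - Q i (Xx w0 i) - R i (Xx w0) - ∑ k, ContinuousLinearMap.adjoint (L k i) (Xv w0 k)) - (s i - C i (Xx w1 i) - Q i (Xx w1 i) - R i (Xx w1) - ∑ k, ContinuousLinearMap.adjoint (L k i) (Xv w1 k))⟫ = -(∑ i, ⟪Xx w0 i - Xx w1 i, C i (Xx w0 i) - C i (Xx w1 i)⟫) - (∑ i, ⟪Xx w0 i - Xx w1 i, Q i (Xx w0 i) - Q i (Xx w1 i)⟫) - (∑ i, ⟪Xx w0 i - Xx w1 i, R i (Xx w0) - R i (Xx w1)⟫)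
        - ∑ i, ∑ k, ⟪L k i (Xx w0 i - Xx w1 i), Xv w0 k - Xv w1 k⟫ := by
      rw [Finset.sum_congr rfl fun i _ => htAeq i]
      simp only [Finset.sum_sub_distrib, Finset.sum_neg_distrib]
    have h2' : ∑ k, ⟪Xy w0 k - Xy w1 k, (-Bc k (Xy w0 k) - Bl k (Xy w0 k) + Xv w0 k) - (-Bc k (Xy w1 k) - Bl k (Xy w1 k) + Xv w1 k)⟫ = (∑ k, ⟪Xy w0 k - Xy w1 k, Xv w0 k - Xv w1 k⟫) - (∑ k, ⟪Xy w0 k - Xy w1 k, Bc k (Xy w0 k) - Bc k (Xy w1 k)⟫) - ∑ k, ⟪Xy w0 k - Xy w1 k, Bl k (Xy w0 k) - Bl k (Xy w1 k)⟫ := by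
      rw [Finset.sum_congr rfl (fun k _ => by
        simp only [inner_sub_right, inner_add_right, inner_neg_right]
        ring :
        ∀ k ∈ Finset.univ, ⟪Xy w0 k - Xy w1 k, (-Bc k (Xy w0 k) - Bl k (Xy w0 k) + Xv w0 k) - (-Bc k (Xy w1 k) - Bl k (Xy w1 k) + Xv w1 k)⟫ = ⟪Xy w0 k - Xy w1 k, Xv w0 k - Xv w1 k⟫ - ⟪Xy w0 k - Xy w1 k, Bc k (Xy w0 k) - Bc k (Xy w1 k)⟫ - ⟪Xy w0 k - Xy w1 k, Bl k (Xy w0 k) - Bl k (Xy w1 k)⟫)]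
      simp only [Finset.sum_sub_distrib]
    have h3' : ∑ k, ⟪Xz w0 k - Xz w1 k, (-Dc k (Xz w0 k) - Dl k (Xz w0 k) + Xv w0 k) - (-Dc k (Xz w1 k) - Dl k (Xz w1 k) + Xv w1 k)⟫ = (∑ k, ⟪Xz w0 k - Xz w1 k, Xv w0 k - Xv w1 k⟫) - (∑ k, ⟪Xz w0 k - Xz w1 k, Dc k (Xz w0 k) - Dc k (Xz w1 k)⟫) - ∑ k, ⟪Xz w0 k - Xz w1 k, Dl k (Xz w0 k) - Dl k (Xz w1 k)⟫ := by
      rw [Finset.sum_congr rfl (fun k _ => by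
        simp only [inner_sub_right, inner_add_right, inner_neg_right]
        ring :
        ∀ k ∈ Finset.univ, ⟪Xz w0 k - Xz w1 k, (-Dc k (Xz w0 k) - Dl k (Xz w0 k) + Xv w0 k) - (-Dc k (Xz w1 k) - Dl k (Xz w1 k) + Xv w1 k)⟫ = ⟪Xz w0 k - Xz w1 k, Xv w0 k - Xv w1 k⟫ - ⟪Xz w0 k - Xz w1 k, Dc k (Xz w0 k) - Dc k (Xz w1 k)⟫ - ⟪Xz w0 k - Xz w1 k, Dl k (Xz w0 k) - Dl k (Xz w1 k)⟫)]
      simp only [Finset.sum_sub_distrib]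
    -- nonnegativity of the sums
    have SA0 : (0:ℝ) ≤ ∑ i, ⟪Xx w0 i - Xx w1 i, (s i - C i (Xx w0 i) - Q i (Xx w0 i) - R i (Xx w0) - ∑ k, ContinuousLinearMap.adjoint (L k i) (Xv w0 k)) - (s i - C i (Xx w1 i) - Q i (Xx w1 i) - R i (Xx w1) - ∑ k, ContinuousLinearMap.adjoint (L k i) (Xv w1 k))⟫ := Finset.sum_nonneg fun i _ => tA i
    have SB0 : (0:ℝ) ≤ ∑ k, ⟪Xy w0 k - Xy w1 k, (-Bc k (Xy w0 k) - Bl k (Xy w0 k) + Xv w0 k) - (-Bc k (Xy w1 k) - Bl k (Xy w1 k) + Xv w1 k)⟫ := Finset.sum_nonneg fun k _ => tB k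
    have SD0 : (0:ℝ) ≤ ∑ k, ⟪Xz w0 k - Xz w1 k, (-Dc k (Xz w0 k) - Dl k (Xz w0 k) + Xv w0 k) - (-Dc k (Xz w1 k) - Dl k (Xz w1 k) + Xv w1 k)⟫ := Finset.sum_nonneg fun k _ => tD k
    have SC0 : (0:ℝ) ≤ ∑ i, ⟪Xx w0 i - Xx w1 i, C i (Xx w0 i) - C i (Xx w1 i)⟫ := Finset.sum_nonneg fun i _ => cC i
    have SQ0 : (0:ℝ) ≤ ∑ i, ⟪Xx w0 i - Xx w1 i, Q i (Xx w0 i) - Q i (Xx w1 i)⟫ := Finset.sum_nonneg fun i _ => cQ i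
    have SBc0 : (0:ℝ) ≤ ∑ k, ⟪Xy w0 k - Xy w1 k, Bc k (Xy w0 k) - Bc k (Xy w1 k)⟫ := Finset.sum_nonneg fun k _ => cBc k
    have SBl0 : (0:ℝ) ≤ ∑ k, ⟪Xy w0 k - Xy w1 k, Bl k (Xy w0 k) - Bl k (Xy w1 k)⟫ := Finset.sum_nonneg fun k _ => cBl k
    have SDc0 : (0:ℝ) ≤ ∑ k, ⟪Xz w0 k - Xz w1 k, Dc k (Xz w0 k) - Dc k (Xz w1 k)⟫ := Finset.sum_nonneg fun k _ => cDc k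
    have SDl0 : (0:ℝ) ≤ ∑ k, ⟪Xz w0 k - Xz w1 k, Dl k (Xz w0 k) - Dl k (Xz w1 k)⟫ := Finset.sum_nonneg fun k _ => cDl k
    -- all individual sums vanish
    have hSA : ∑ i, ⟪Xx w0 i - Xx w1 i, (s i - C i (Xx w0 i) - Q i (Xx w0 i) - R i (Xx w0) - ∑ k, ContinuousLinearMap.adjoint (L k i) (Xv w0 k)) - (s i - C i (Xx w1 i) - Q i (Xx w1 i) - R i (Xx w1) - ∑ k, ContinuousLinearMap.adjoint (L k i) (Xv w1 k))⟫ = 0 := by linarith only [h1', h2', h3', hswap, SA0, SB0, SD0, SC0, SQ0, cR, SBc0, SBl0, SDc0, SDl0]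
    have hSB : ∑ k, ⟪Xy w0 k - Xy w1 k, (-Bc k (Xy w0 k) - Bl k (Xy w0 k) + Xv w0 k) - (-Bc k (Xy w1 k) - Bl k (Xy w1 k) + Xv w1 k)⟫ = 0 := by linarith only [h1', h2', h3', hswap, SA0, SB0, SD0, SC0, SQ0, cR, SBc0, SBl0, SDc0, SDl0]
    have hSD : ∑ k, ⟪Xz w0 k - Xz w1 k, (-Dc k (Xz w0 k) - Dl k (Xz w0 k) + Xv w0 k) - (-Dc k (Xz w1 k) - Dl k (Xz w1 k) + Xv w1 k)⟫ = 0 := by linarith only [h1', h2', h3', hswap, SA0, SB0, SD0, SC0, SQ0, cR, SBc0, SBl0, SDc0, SDl0]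
    have hSC : ∑ i, ⟪Xx w0 i - Xx w1 i, C i (Xx w0 i) - C i (Xx w1 i)⟫ = 0 := by linarith only [h1', h2', h3', hswap, SA0, SB0, SD0, SC0, SQ0, cR, SBc0, SBl0, SDc0, SDl0]
    have hSQ : ∑ i, ⟪Xx w0 i - Xx w1 i, Q i (Xx w0 i) - Q i (Xx w1 i)⟫ = 0 := by linarith only [h1', h2', h3', hswap, SA0, SB0, SD0, SC0, SQ0, cR, SBc0, SBl0, SDc0, SDl0]
    have cRzero : ∑ i, ⟪Xx w0 i - Xx w1 i, R i (Xx w0) - R i (Xx w1)⟫ = 0 := by linarith only [h1', h2', h3', hswap, SA0, SB0, SD0, SC0, SQ0, cR, SBc0, SBl0, SDc0, SDl0]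
    have hSBc : ∑ k, ⟪Xy w0 k - Xy w1 k, Bc k (Xy w0 k) - Bc k (Xy w1 k)⟫ = 0 := by linarith only [h1', h2', h3', hswap, SA0, SB0, SD0, SC0, SQ0, cR, SBc0, SBl0, SDc0, SDl0]
    have hSBl : ∑ k, ⟪Xy w0 k - Xy w1 k, Bl k (Xy w0 k) - Bl k (Xy w1 k)⟫ = 0 := by linarith only [h1', h2', h3', hswap, SA0, SB0, SD0, SC0, SQ0, cR, SBc0, SBl0, SDc0, SDl0]
    have hSDc : ∑ k, ⟪Xz w0 k - Xz w1 k, Dc k (Xz w0 k) - Dc k (Xz w1 k)⟫ = 0 := by linarith only [h1', h2', h3', hswap, SA0, SB0, SD0, SC0, SQ0, cR, SBc0, SBl0, SDc0, SDl0]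
    have hSDl : ∑ k, ⟪Xz w0 k - Xz w1 k, Dl k (Xz w0 k) - Dl k (Xz w1 k)⟫ = 0 := by linarith only [h1', h2', h3', hswap, SA0, SB0, SD0, SC0, SQ0, cR, SBc0, SBl0, SDc0, SDl0]
    have tAzero : ∀ i, ⟪Xx w0 i - Xx w1 i, (s i - C i (Xx w0 i) - Q i (Xx w0 i) - R i (Xx w0) - ∑ k, ContinuousLinearMap.adjoint (L k i) (Xv w0 k)) - (s i - C i (Xx w1 i) - Q i (Xx w1 i) - R i (Xx w1) - ∑ k, ContinuousLinearMap.adjoint (L k i) (Xv w1 k))⟫ = 0 := fun i =>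
      (Finset.sum_eq_zero_iff_of_nonneg fun i _ => tA i).mp hSA i (Finset.mem_univ i)
    have tBzero : ∀ k, ⟪Xy w0 k - Xy w1 k, (-Bc k (Xy w0 k) - Bl k (Xy w0 k) + Xv w0 k) - (-Bc k (Xy w1 k) - Bl k (Xy w1 k) + Xv w1 k)⟫ = 0 := fun k =>
      (Finset.sum_eq_zero_iff_of_nonneg fun k _ => tB k).mp hSB k (Finset.mem_univ k)
    have tDzero : ∀ k, ⟪Xz w0 k - Xz w1 k, (-Dc k (Xz w0 k) - Dl k (Xz w0 k) + Xv w0 k) - (-Dc k (Xz w1 k) - Dl k (Xz w1 k) + Xv w1 k)⟫ = 0 := fun k =>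
      (Finset.sum_eq_zero_iff_of_nonneg fun k _ => tD k).mp hSD k (Finset.mem_univ k)
    have cCzero : ∀ i, ⟪Xx w0 i - Xx w1 i, C i (Xx w0 i) - C i (Xx w1 i)⟫ = 0 := fun i =>
      (Finset.sum_eq_zero_iff_of_nonneg fun i _ => cC i).mp hSC i (Finset.mem_univ i)
    have cQzero : ∀ i, ⟪Xx w0 i - Xx w1 i, Q i (Xx w0 i) - Q i (Xx w1 i)⟫ = 0 := fun i =>
      (Finset.sum_eq_zero_iff_of_nonneg fun i _ => cQ i).mp hSQ i (Finset.mem_univ i)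
    have cBczero : ∀ k, ⟪Xy w0 k - Xy w1 k, Bc k (Xy w0 k) - Bc k (Xy w1 k)⟫ = 0 := fun k =>
      (Finset.sum_eq_zero_iff_of_nonneg fun k _ => cBc k).mp hSBc k (Finset.mem_univ k)
    have cBlzero : ∀ k, ⟪Xy w0 k - Xy w1 k, Bl k (Xy w0 k) - Bl k (Xy w1 k)⟫ = 0 := fun k =>
      (Finset.sum_eq_zero_iff_of_nonneg fun k _ => cBl k).mp hSBl k (Finset.mem_univ k)
    have cDczero : ∀ k, ⟪Xz w0 k - Xz w1 k, Dc k (Xz w0 k) - Dc k (Xz w1 k)⟫ = 0 := fun k =>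
      (Finset.sum_eq_zero_iff_of_nonneg fun k _ => cDc k).mp hSDc k (Finset.mem_univ k)
    have cDlzero : ∀ k, ⟪Xz w0 k - Xz w1 k, Dl k (Xz w0 k) - Dl k (Xz w1 k)⟫ = 0 := fun k =>
      (Finset.sum_eq_zero_iff_of_nonneg fun k _ => cDl k).mp hSDl k (Finset.mem_univ k)
    -- the single-valued maps are affine along the segment
    have hCaff : ∀ i, C i (a • Xx w0 i + b • Xx w1 i)
        = a • C i (Xx w0 i) + b • C i (Xx w1 i) := fun i =>
      mono_map_comb ((hC i).monotone (hαc i)) (((hC i).lipschitz (hαc i)).continuous') (cCzero i) ha hb hab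
    have hQaff : ∀ i, Q i (a • Xx w0 i + b • Xx w1 i)
        = a • Q i (Xx w0 i) + b • Q i (Xx w1 i) := fun i =>
      mono_map_comb (hQm i) ((hQl i).continuous') (cQzero i) ha hb hab
    have hBcaff : ∀ k, Bc k (a • Xy w0 k + b • Xy w1 k)
        = a • Bc k (Xy w0 k) + b • Bc k (Xy w1 k) := fun k =>
      mono_map_comb ((hBc k).monotone (hβc k)) (((hBc k).lipschitz (hβc k)).continuous') (cBczero k) ha hb hab
    have hBlaff : ∀ k, Bl k (a • Xy w0 k + b • Xy w1 k)
        = a • Bl k (Xy w0 k) + b • Bl k (Xy w1 k) := fun k =>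
      mono_map_comb (hBlm k) ((hBll k).continuous') (cBlzero k) ha hb hab
    have hDcaff : ∀ k, Dc k (a • Xz w0 k + b • Xz w1 k)
        = a • Dc k (Xz w0 k) + b • Dc k (Xz w1 k) := fun k =>
      mono_map_comb ((hDc k).monotone (hδc k)) (((hDc k).lipschitz (hδc k)).continuous') (cDczero k) ha hb hab
    have hDlaff : ∀ k, Dl k (a • Xz w0 k + b • Xz w1 k)
        = a • Dl k (Xz w0 k) + b • Dl k (Xz w1 k) := fun k =>
      mono_map_comb (hDlm k) ((hDll k).continuous') (cDlzero k) ha hb hab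
    have hRaff : ∀ i, R i (Xx (a • w0 + b • w1)) = a • R i (Xx w0) + b • R i (Xx w1) := by
      have hz' : ⟪Xx w0 - Xx w1,
          (fun x : PiLp 2 H => (WithLp.toLp 2 (fun i => R i x) : PiLp 2 H)) (Xx w0)
            - (fun x : PiLp 2 H => (WithLp.toLp 2 (fun i => R i x) : PiLp 2 H)) (Xx w1)⟫ = 0 := by
        rw [PiLp.inner_apply]
        simp only [PiLp.sub_apply]
        exact cRzero
      have h := mono_map_comb hRm hRl.continuous' hz' ha hb hab
      intro i
      rw [Xx_comb a b w0 w1]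
      have h2 := congrArg (fun v : PiLp 2 H => v.ofLp i) h
      simpa only [PiLp.add_apply, PiLp.smul_apply] using h2
    -- conclude membership of the convex combination
    refine (hmem _).mpr ⟨?_, ?_, ?_, ?_⟩
    · intro i
      have hsum : ∑ k, ContinuousLinearMap.adjoint (L k i) (Xv (a • w0 + b • w1) k)
          = a • ∑ k, ContinuousLinearMap.adjoint (L k i) (Xv w0 k)
            + b • ∑ k, ContinuousLinearMap.adjoint (L k i) (Xv w1 k) := by
        rw [Finset.smul_sum, Finset.smul_sum, ← Finset.sum_add_distrib]
        refine Finset.sum_congr rfl fun k _ => ?_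
        rw [Xv_comb_apply a b w0 w1 k, map_add, map_smul, map_smul]
      have key : s i - C i (Xx (a • w0 + b • w1) i) - Q i (Xx (a • w0 + b • w1) i) - R i (Xx (a • w0 + b • w1)) - ∑ k, ContinuousLinearMap.adjoint (L k i) (Xv (a • w0 + b • w1) k)
          = a • (s i - C i (Xx w0 i) - Q i (Xx w0 i) - R i (Xx w0) - ∑ k, ContinuousLinearMap.adjoint (L k i) (Xv w0 k)) + b • (s i - C i (Xx w1 i) - Q i (Xx w1 i) - R i (Xx w1) - ∑ k, ContinuousLinearMap.adjoint (L k i) (Xv w1 k)) := by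
        rw [Xx_comb_apply a b w0 w1 i, hCaff i, hQaff i, hRaff i, hsum]
        match_scalars <;> linarith
      rw [key, Xx_comb_apply a b w0 w1 i]
      exact maxMonotone_comb (hA i) (h0x i) (h1x i) (tAzero i) ha hb hab
    · intro k
      have key : -Bc k (Xy (a • w0 + b • w1) k) - Bl k (Xy (a • w0 + b • w1) k) + Xv (a • w0 + b • w1) k
          = a • (-Bc k (Xy w0 k) - Bl k (Xy w0 k) + Xv w0 k) + b • (-Bc k (Xy w1 k) - Bl k (Xy w1 k) + Xv w1 k) := by
        rw [Xy_comb_apply a b w0 w1 k, hBcaff k, hBlaff k, Xv_comb_apply a b w0 w1 k]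
        match_scalars <;> linarith
      rw [key, Xy_comb_apply a b w0 w1 k]
      exact maxMonotone_comb (hBm k) (h0y k) (h1y k) (tBzero k) ha hb hab
    · intro k
      have key : -Dc k (Xz (a • w0 + b • w1) k) - Dl k (Xz (a • w0 + b • w1) k) + Xv (a • w0 + b • w1) k
          = a • (-Dc k (Xz w0 k) - Dl k (Xz w0 k) + Xv w0 k) + b • (-Dc k (Xz w1 k) - Dl k (Xz w1 k) + Xv w1 k) := by
        rw [Xz_comb_apply a b w0 w1 k, hDcaff k, hDlaff k, Xv_comb_apply a b w0 w1 k]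
        match_scalars <;> linarith
      rw [key, Xz_comb_apply a b w0 w1 k]
      exact maxMonotone_comb (hDm k) (h0z k) (h1z k) (tDzero k) ha hb hab
    · intro k
      have e0 : r k + Xy w0 k + Xz w0 k = ∑ i, L k i (Xx w0 i) := sub_eq_zero.mp (h0v k).symm
      have e1 : r k + Xy w1 k + Xz w1 k = ∑ i, L k i (Xx w1 i) := sub_eq_zero.mp (h1v k).symm
      have hsum : ∑ i, L k i (Xx (a • w0 + b • w1) i)
          = a • ∑ i, L k i (Xx w0 i) + b • ∑ i, L k i (Xx w1 i) := by
        rw [Finset.smul_sum, Finset.smul_sum, ← Finset.sum_add_distrib]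
        refine Finset.sum_congr rfl fun i _ => ?_
        rw [Xx_comb_apply a b w0 w1 i, map_add, map_smul, map_smul]
      rw [Xy_comb_apply a b w0 w1 k, Xz_comb_apply a b w0 w1 k, hsum, ← e0, ← e1]
      match_scalars <;> linarith

end
end

section
/- If (x̄, ȳ, z̄, v̄*) is a zero of the saddle operator S associated with Problem 1, then (x̄, v̄*) belongs to the Kuhn–Tucker set Z; moreover Z ⊆ 𝒫 × 𝒟, i.e. for every (x, v*) ∈ Z, x solves the primal problem and v* solves the dual problem. -/
/-!
Statement 2: If `(x̄, ȳ, z̄, v̄*)` is a zero of the saddle operator `S` of Problem 1,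
then `(x̄, v̄*)` belongs to the Kuhn–Tucker set `Z`; moreover `Z ⊆ 𝒫 × 𝒟`.
-/

open scoped RealInnerProductSpace Pointwise
open Filter Topology

noncomputable section

/-- Inverse of a set-valued operator. -/
def opInv {E : Type*} (A : E → Set E) : E → Set E := fun u => {x | u ∈ A x}

/-- Parallel sum `B □ D = (B⁻¹ + D⁻¹)⁻¹` of two set-valued operators. -/
def parSum {E : Type*} [AddCommGroup E] (B D : E → Set E) : E → Set E :=
  opInv fun u => opInv B u + opInv D u

/-- Sum `A + f` of a set-valued operator and a single-valued one. -/
def svAdd {E : Type*} [AddCommGroup E] (Am : E → Set E) (f : E → E) : E → Set E :=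
  fun x => {p | p - f x ∈ Am x}

universe u

variable {I K : Type*}

variable {H : I → Type u} {G : K → Type u}

/-- The Kuhn–Tucker set `Z` of Problem 1. -/
def KTSet
    [Fintype I] [Fintype K]
    [∀ i, NormedAddCommGroup (H i)] [∀ i, InnerProductSpace ℝ (H i)]
    [∀ i, CompleteSpace (H i)]
    [∀ k, NormedAddCommGroup (G k)] [∀ k, InnerProductSpace ℝ (G k)]
    [∀ k, CompleteSpace (G k)]
    (s : ∀ i, H i) (r : ∀ k, G k)
    (A : ∀ i, H i → Set (H i)) (C Q : ∀ i, H i → H i) (R : ∀ i, PiLp 2 H → H i)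
    (Bm : ∀ k, G k → Set (G k)) (Bc Bl : ∀ k, G k → G k)
    (Dm : ∀ k, G k → Set (G k)) (Dc Dl : ∀ k, G k → G k)
    (L : ∀ k i, H i →L[ℝ] G k) : Set (PiLp 2 H × PiLp 2 G) :=
  {p | (∀ i, s i - (∑ j, ContinuousLinearMap.adjoint (L j i) (p.2 j))
          - C i (p.1 i) - Q i (p.1 i) - R i p.1 ∈ A i (p.1 i)) ∧
       (∀ k, (∑ j, L k j (p.1 j)) - r k ∈
          opInv (svAdd (Bm k) (fun u => Bc k u + Bl k u)) (p.2 k)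
          + opInv (svAdd (Dm k) (fun u => Dc k u + Dl k u)) (p.2 k))}

/-- The set `𝒫` of solutions of the primal problem of Problem 1. -/
def PrimalSol
    [Fintype I] [Fintype K]
    [∀ i, NormedAddCommGroup (H i)] [∀ i, InnerProductSpace ℝ (H i)]
    [∀ i, CompleteSpace (H i)]
    [∀ k, NormedAddCommGroup (G k)] [∀ k, InnerProductSpace ℝ (G k)]
    [∀ k, CompleteSpace (G k)]
    (s : ∀ i, H i) (r : ∀ k, G k)
    (A : ∀ i, H i → Set (H i)) (C Q : ∀ i, H i → H i) (R : ∀ i, PiLp 2 H → H i)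
    (Bm : ∀ k, G k → Set (G k)) (Bc Bl : ∀ k, G k → G k)
    (Dm : ∀ k, G k → Set (G k)) (Dc Dl : ∀ k, G k → G k)
    (L : ∀ k i, H i →L[ℝ] G k) : Set (PiLp 2 H) :=
  {xb | ∀ i, ∃ u : ∀ k, G k,
      (∀ k, u k ∈ parSum (svAdd (Bm k) (fun w => Bc k w + Bl k w))
          (svAdd (Dm k) (fun w => Dc k w + Dl k w)) ((∑ j, L k j (xb j)) - r k)) ∧
      s i - C i (xb i) - Q i (xb i) - R i xb
        - ∑ k, ContinuousLinearMap.adjoint (L k i) (u k) ∈ A i (xb i)}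

/-- The set `𝒟` of solutions of the dual problem of Problem 1. -/
def DualSol
    [Fintype I] [Fintype K]
    [∀ i, NormedAddCommGroup (H i)] [∀ i, InnerProductSpace ℝ (H i)]
    [∀ i, CompleteSpace (H i)]
    [∀ k, NormedAddCommGroup (G k)] [∀ k, InnerProductSpace ℝ (G k)]
    [∀ k, CompleteSpace (G k)]
    (s : ∀ i, H i) (r : ∀ k, G k)
    (A : ∀ i, H i → Set (H i)) (C Q : ∀ i, H i → H i) (R : ∀ i, PiLp 2 H → H i)
    (Bm : ∀ k, G k → Set (G k)) (Bc Bl : ∀ k, G k → G k)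
    (Dm : ∀ k, G k → Set (G k)) (Dc Dl : ∀ k, G k → G k)
    (L : ∀ k i, H i →L[ℝ] G k) : Set (PiLp 2 G) :=
  {v | ∃ x : PiLp 2 H,
      (∀ i, s i - (∑ j, ContinuousLinearMap.adjoint (L j i) (v j))
          - C i (x i) - Q i (x i) - R i x ∈ A i (x i)) ∧
      (∀ k, v k ∈ parSum (svAdd (Bm k) (fun w => Bc k w + Bl k w))
          (svAdd (Dm k) (fun w => Dc k w + Dl k w)) ((∑ j, L k j (x j)) - r k))}

/-- If `(x̄, ȳ, z̄, v̄*)` is a zero of the saddle operator `S`, then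
`(x̄, v̄*)` belongs to the Kuhn–Tucker set `Z`, and `Z ⊆ 𝒫 × 𝒟`. -/
theorem zero_saddleOp_mem_KT_and_KT_subset
    [Fintype I] [Fintype K] [Nonempty I] [Nonempty K]
    [∀ i, NormedAddCommGroup (H i)] [∀ i, InnerProductSpace ℝ (H i)]
    [∀ i, CompleteSpace (H i)]
    [∀ k, NormedAddCommGroup (G k)] [∀ k, InnerProductSpace ℝ (G k)]
    [∀ k, CompleteSpace (G k)]
    (s : ∀ i, H i) (r : ∀ k, G k)
    (A : ∀ i, H i → Set (H i)) (hA : ∀ i, IsMaxMonotoneOp (A i))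
    (C : ∀ i, H i → H i) (αc : I → ℝ) (hαc : ∀ i, 0 < αc i)
    (hC : ∀ i, IsCocoercive (C i) (αc i))
    (Q : ∀ i, H i → H i) (αl : I → ℝ) (hαl : ∀ i, 0 ≤ αl i)
    (hQm : ∀ i, IsMonotoneMap (Q i)) (hQl : ∀ i, IsLipschitzMap (Q i) (αl i))
    (R : ∀ i, PiLp 2 H → H i) (χ : ℝ) (hχ : 0 ≤ χ)
    (hRm : IsMonotoneMap (fun x : PiLp 2 H => (WithLp.toLp 2 (fun i => R i x) : PiLp 2 H)))
    (hRl : IsLipschitzMap (fun x : PiLp 2 H => (WithLp.toLp 2 (fun i => R i x) : PiLp 2 H)) χ)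
    (Bm : ∀ k, G k → Set (G k)) (hBm : ∀ k, IsMaxMonotoneOp (Bm k))
    (Bc : ∀ k, G k → G k) (βc : K → ℝ) (hβc : ∀ k, 0 < βc k)
    (hBc : ∀ k, IsCocoercive (Bc k) (βc k))
    (Bl : ∀ k, G k → G k) (βl : K → ℝ) (hβl : ∀ k, 0 ≤ βl k)
    (hBlm : ∀ k, IsMonotoneMap (Bl k)) (hBll : ∀ k, IsLipschitzMap (Bl k) (βl k))
    (Dm : ∀ k, G k → Set (G k)) (hDm : ∀ k, IsMaxMonotoneOp (Dm k))
    (Dc : ∀ k, G k → G k) (δc : K → ℝ) (hδc : ∀ k, 0 < δc k)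
    (hDc : ∀ k, IsCocoercive (Dc k) (δc k))
    (Dl : ∀ k, G k → G k) (δl : K → ℝ) (hδl : ∀ k, 0 ≤ δl k)
    (hDlm : ∀ k, IsMonotoneMap (Dl k)) (hDll : ∀ k, IsLipschitzMap (Dl k) (δl k))
    (L : ∀ k i, H i →L[ℝ] G k)
    (wb : PiLp 2 (XFam H G))
    (hwb : 0 ∈ SaddleOp s r A C Q R Bm Bc Bl Dm Dc Dl L wb) :
    (Xx wb, Xv wb) ∈ KTSet s r A C Q R Bm Bc Bl Dm Dc Dl L ∧
      ∀ p ∈ KTSet s r A C Q R Bm Bc Bl Dm Dc Dl L,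
        p.1 ∈ PrimalSol s r A C Q R Bm Bc Bl Dm Dc Dl L ∧
        p.2 ∈ DualSol s r A C Q R Bm Bc Bl Dm Dc Dl L := by
  obtain ⟨h1, h2, h3, h4⟩ := hwb
  have hx0 : ∀ i, Xx (0 : PiLp 2 (XFam H G)) i = 0 := fun _ => rfl
  have hy0 : ∀ k, Xy (0 : PiLp 2 (XFam H G)) k = 0 := fun _ => rfl
  have hz0 : ∀ k, Xz (0 : PiLp 2 (XFam H G)) k = 0 := fun _ => rfl
  have hv0 : ∀ k, Xv (0 : PiLp 2 (XFam H G)) k = 0 := fun _ => rfl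
  constructor
  · constructor
    · intro i
      have h := h1 i
      rw [hx0] at h
      have : s i - (∑ j, ContinuousLinearMap.adjoint (L j i) (Xv wb j))
          - C i (Xx wb i) - Q i (Xx wb i) - R i (Xx wb)
          = 0 + s i - C i (Xx wb i) - Q i (Xx wb i) - R i (Xx wb)
          - ∑ k, ContinuousLinearMap.adjoint (L k i) (Xv wb k) := by abel
      rw [this]; exact h
    · intro k
      have hb := h2 k; have hd := h3 k; have he := h4 k
      rw [hy0] at hb; rw [hz0] at hd; rw [hv0] at he
      have hsum : (∑ j, L k j (Xx wb j)) - r k = Xy wb k + Xz wb k := by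
        have h := he.symm
        rw [sub_eq_zero] at h
        rw [← h]; abel
      rw [hsum]
      refine Set.add_mem_add ?_ ?_
      · show Xv wb k - (Bc k (Xy wb k) + Bl k (Xy wb k)) ∈ Bm k (Xy wb k)
        have : Xv wb k - (Bc k (Xy wb k) + Bl k (Xy wb k))
            = 0 - Bc k (Xy wb k) - Bl k (Xy wb k) + Xv wb k := by abel
        rw [this]; exact hb
      · show Xv wb k - (Dc k (Xz wb k) + Dl k (Xz wb k)) ∈ Dm k (Xz wb k)
        have : Xv wb k - (Dc k (Xz wb k) + Dl k (Xz wb k))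
            = 0 - Dc k (Xz wb k) - Dl k (Xz wb k) + Xv wb k := by abel
        rw [this]; exact hd
  · rintro p ⟨hp1, hp2⟩
    constructor
    · intro i
      refine ⟨p.2, fun k => ?_, ?_⟩
      · exact hp2 k
      · have h := hp1 i
        have : s i - C i (p.1 i) - Q i (p.1 i) - R i p.1
            - ∑ k, ContinuousLinearMap.adjoint (L k i) (p.2 k)
            = s i - (∑ j, ContinuousLinearMap.adjoint (L j i) (p.2 j))
            - C i (p.1 i) - Q i (p.1 i) - R i p.1 := by abel
        rw [this]; exact h
    · exact ⟨p.1, hp1, fun k => hp2 k⟩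


end
end

section
/- In the setting of Problem 1, the following are equivalent: the dual solution set 𝒟 is nonempty; the zero set zer S of the saddle operator is nonempty; the Kuhn–Tucker set Z is nonempty. Moreover, each of these conditions implies that the primal solution set 𝒫 is nonempty. -/
/-!
Statement 3: In the setting of Problem 1, `𝒟 ≠ ∅ ⇔ zer S ≠ ∅ ⇔ Z ≠ ∅`, and each of
these conditions implies `𝒫 ≠ ∅`.
-/

open scoped RealInnerProductSpace Pointwise
open Filter Topology

noncomputable section

universe u

variable {I K : Type*}

variable {H : I → Type u} {G : K → Type u}

/-- In the setting of Problem 1: the dual solution set `𝒟`, the zero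
set of the saddle operator `S` and the Kuhn–Tucker set `Z` are simultaneously nonempty,
and their nonemptiness implies that the primal solution set `𝒫` is nonempty. -/
theorem dual_nonempty_iff_zerS_nonempty_iff_KT_nonempty
    [Fintype I] [Fintype K] [Nonempty I] [Nonempty K]
    [∀ i, NormedAddCommGroup (H i)] [∀ i, InnerProductSpace ℝ (H i)]
    [∀ i, CompleteSpace (H i)]
    [∀ k, NormedAddCommGroup (G k)] [∀ k, InnerProductSpace ℝ (G k)]
    [∀ k, CompleteSpace (G k)]
    (s : ∀ i, H i) (r : ∀ k, G k)
    (A : ∀ i, H i → Set (H i)) (hA : ∀ i, IsMaxMonotoneOp (A i))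
    (C : ∀ i, H i → H i) (αc : I → ℝ) (hαc : ∀ i, 0 < αc i)
    (hC : ∀ i, IsCocoercive (C i) (αc i))
    (Q : ∀ i, H i → H i) (αl : I → ℝ) (hαl : ∀ i, 0 ≤ αl i)
    (hQm : ∀ i, IsMonotoneMap (Q i)) (hQl : ∀ i, IsLipschitzMap (Q i) (αl i))
    (R : ∀ i, PiLp 2 H → H i) (χ : ℝ) (hχ : 0 ≤ χ)
    (hRm : IsMonotoneMap (fun x : PiLp 2 H => (WithLp.toLp 2 (fun i => R i x) : PiLp 2 H)))
    (hRl : IsLipschitzMap (fun x : PiLp 2 H => (WithLp.toLp 2 (fun i => R i x) : PiLp 2 H)) χ)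
    (Bm : ∀ k, G k → Set (G k)) (hBm : ∀ k, IsMaxMonotoneOp (Bm k))
    (Bc : ∀ k, G k → G k) (βc : K → ℝ) (hβc : ∀ k, 0 < βc k)
    (hBc : ∀ k, IsCocoercive (Bc k) (βc k))
    (Bl : ∀ k, G k → G k) (βl : K → ℝ) (hβl : ∀ k, 0 ≤ βl k)
    (hBlm : ∀ k, IsMonotoneMap (Bl k)) (hBll : ∀ k, IsLipschitzMap (Bl k) (βl k))
    (Dm : ∀ k, G k → Set (G k)) (hDm : ∀ k, IsMaxMonotoneOp (Dm k))
    (Dc : ∀ k, G k → G k) (δc : K → ℝ) (hδc : ∀ k, 0 < δc k)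
    (hDc : ∀ k, IsCocoercive (Dc k) (δc k))
    (Dl : ∀ k, G k → G k) (δl : K → ℝ) (hδl : ∀ k, 0 ≤ δl k)
    (hDlm : ∀ k, IsMonotoneMap (Dl k)) (hDll : ∀ k, IsLipschitzMap (Dl k) (δl k))
    (L : ∀ k i, H i →L[ℝ] G k) :
    ((DualSol s r A C Q R Bm Bc Bl Dm Dc Dl L).Nonempty ↔
      {w : PiLp 2 (XFam H G) | 0 ∈ SaddleOp s r A C Q R Bm Bc Bl Dm Dc Dl L w}.Nonempty) ∧
    ({w : PiLp 2 (XFam H G) | 0 ∈ SaddleOp s r A C Q R Bm Bc Bl Dm Dc Dl L w}.Nonempty ↔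
      (KTSet s r A C Q R Bm Bc Bl Dm Dc Dl L).Nonempty) ∧
    ((KTSet s r A C Q R Bm Bc Bl Dm Dc Dl L).Nonempty →
      (PrimalSol s r A C Q R Bm Bc Bl Dm Dc Dl L).Nonempty) := by
  classical
  -- Abbreviations
  have hZK :
      {w : PiLp 2 (XFam H G) | 0 ∈ SaddleOp s r A C Q R Bm Bc Bl Dm Dc Dl L w}.Nonempty ↔
      (KTSet s r A C Q R Bm Bc Bl Dm Dc Dl L).Nonempty := by
    constructor
    · rintro ⟨w, h1, h2, h3, h4⟩
      refine ⟨(Xx w, Xv w), ?_, ?_⟩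
      · intro i
        have h := h1 i
        have hz : Xx (0 : PiLp 2 (XFam H G)) i = 0 := rfl
        rw [hz] at h
        have e : (0 : H i) + s i - C i (Xx w i) - Q i (Xx w i) - R i (Xx w)
            - ∑ k, ContinuousLinearMap.adjoint (L k i) (Xv w k)
            = s i - (∑ j, ContinuousLinearMap.adjoint (L j i) (Xv w j))
              - C i (Xx w i) - Q i (Xx w i) - R i (Xx w) := by abel
        rw [e] at h
        exact h
      · intro k
        have hy := h2 k
        have hzk := h3 k
        have hv := h4 k
        have hy0 : Xy (0 : PiLp 2 (XFam H G)) k = 0 := rfl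
        have hz0 : Xz (0 : PiLp 2 (XFam H G)) k = 0 := rfl
        have hv0 : Xv (0 : PiLp 2 (XFam H G)) k = 0 := rfl
        rw [hy0] at hy; rw [hz0] at hzk; rw [hv0] at hv
        refine Set.mem_add.mpr ⟨Xy w k, ?_, Xz w k, ?_, ?_⟩
        · show Xv w k ∈ svAdd (Bm k) (fun u => Bc k u + Bl k u) (Xy w k)
          show Xv w k - (Bc k (Xy w k) + Bl k (Xy w k)) ∈ Bm k (Xy w k)
          have e : Xv w k - (Bc k (Xy w k) + Bl k (Xy w k))
              = (0 : G k) - Bc k (Xy w k) - Bl k (Xy w k) + Xv w k := by abel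
          rw [e]; exact hy
        · show Xv w k ∈ svAdd (Dm k) (fun u => Dc k u + Dl k u) (Xz w k)
          show Xv w k - (Dc k (Xz w k) + Dl k (Xz w k)) ∈ Dm k (Xz w k)
          have e : Xv w k - (Dc k (Xz w k) + Dl k (Xz w k))
              = (0 : G k) - Dc k (Xz w k) - Dl k (Xz w k) + Xv w k := by abel
          rw [e]; exact hzk
        · have h' : r k + Xy w k + Xz w k - ∑ i, L k i (Xx w i) = 0 := hv.symm
          rw [sub_eq_zero] at h'
          rw [eq_sub_iff_add_eq, ← h']; abel
    · rintro ⟨⟨x, v⟩, h1, h2⟩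
      choose y hy z hz hsum using fun k => Set.mem_add.mp (h2 k)
      refine ⟨(WithLp.toLp 2 (fun st => match st with
        | Sum.inl i => x i
        | Sum.inr (Sum.inl k) => y k
        | Sum.inr (Sum.inr (Sum.inl k)) => z k
        | Sum.inr (Sum.inr (Sum.inr k)) => v k : ∀ st, XFam H G st) : PiLp 2 (XFam H G)),
        ?_, ?_, ?_, ?_⟩
      · intro i
        show (0 : H i) + s i - C i (x i) - Q i (x i) - R i x
            - ∑ k, ContinuousLinearMap.adjoint (L k i) (v k) ∈ A i (x i)
        have e : (0 : H i) + s i - C i (x i) - Q i (x i) - R i x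
            - ∑ k, ContinuousLinearMap.adjoint (L k i) (v k)
            = s i - (∑ j, ContinuousLinearMap.adjoint (L j i) (v j))
              - C i (x i) - Q i (x i) - R i x := by abel
        rw [e]; exact h1 i
      · intro k
        show (0 : G k) - Bc k (y k) - Bl k (y k) + v k ∈ Bm k (y k)
        have h : v k - (Bc k (y k) + Bl k (y k)) ∈ Bm k (y k) := hy k
        have e : (0 : G k) - Bc k (y k) - Bl k (y k) + v k
            = v k - (Bc k (y k) + Bl k (y k)) := by abel
        rw [e]; exact h
      · intro k
        show (0 : G k) - Dc k (z k) - Dl k (z k) + v k ∈ Dm k (z k)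
        have h : v k - (Dc k (z k) + Dl k (z k)) ∈ Dm k (z k) := hz k
        have e : (0 : G k) - Dc k (z k) - Dl k (z k) + v k
            = v k - (Dc k (z k) + Dl k (z k)) := by abel
        rw [e]; exact h
      · intro k
        show (0 : G k) = r k + y k + z k - ∑ i, L k i (x i)
        have h : y k + z k = (∑ i, L k i (x i)) - r k := hsum k
        rw [eq_sub_iff_add_eq] at h
        rw [← h]
        abel
  have hDK :
      (DualSol s r A C Q R Bm Bc Bl Dm Dc Dl L).Nonempty ↔
      (KTSet s r A C Q R Bm Bc Bl Dm Dc Dl L).Nonempty := by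
    constructor
    · rintro ⟨v, x, h1, h2⟩
      exact ⟨(x, v), h1, fun k => h2 k⟩
    · rintro ⟨⟨x, v⟩, h1, h2⟩
      exact ⟨v, x, h1, fun k => h2 k⟩
  refine ⟨hDK.trans hZK.symm, hZK, ?_⟩
  rintro ⟨⟨x, v⟩, h1, h2⟩
  refine ⟨x, fun i => ⟨v, fun k => h2 k, ?_⟩⟩
  have e : s i - (∑ j, ContinuousLinearMap.adjoint (L j i) (v j))
      - C i (x i) - Q i (x i) - R i x
      = s i - C i (x i) - Q i (x i) - R i x
        - ∑ k, ContinuousLinearMap.adjoint (L k i) (v k) := by abel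
  rw [← e]; exact h1 i

end
end

section
/- In the setting of Problem 1, if the index set I is a singleton and the primal solution set 𝒫 is nonempty, then the Kuhn–Tucker set Z is nonempty. -/
/-! When `I = {i}`, a primal solution `x̄` comes with one family `v*` with
`v*ₖ ∈ (Bₖ □ Dₖ)(Σⱼ Lₖⱼ x̄ⱼ - rₖ)` that realizes the inclusion at `i`. Since
`v* ∈ (B □ D) y` means literally `y ∈ B⁻¹v* + D⁻¹v*`, the pair `(x̄, v*)` is a Kuhn–Tucker point;
for several indices the families chosen for different `i` need not agree. -/

open scoped RealInnerProductSpace Pointwise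
open Filter Topology

noncomputable section

universe u

variable {I K : Type*}

variable {H : I → Type u} {G : K → Type u}

theorem mem_parSum_iff {E : Type*} [AddCommGroup E] {B D : E → Set E} {y v : E} :
    v ∈ parSum B D y ↔ y ∈ opInv B v + opInv D v :=
  Iff.rfl

section KuhnTucker

variable [Fintype I] [Fintype K]
    [∀ i, NormedAddCommGroup (H i)] [∀ i, InnerProductSpace ℝ (H i)] [∀ i, CompleteSpace (H i)]
    [∀ k, NormedAddCommGroup (G k)] [∀ k, InnerProductSpace ℝ (G k)] [∀ k, CompleteSpace (G k)]
    {s : ∀ i, H i} {r : ∀ k, G k}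
    {A : ∀ i, H i → Set (H i)} {C Q : ∀ i, H i → H i} {R : ∀ i, PiLp 2 H → H i}
    {Bm : ∀ k, G k → Set (G k)} {Bc Bl : ∀ k, G k → G k}
    {Dm : ∀ k, G k → Set (G k)} {Dc Dl : ∀ k, G k → G k}
    {L : ∀ k i, H i →L[ℝ] G k}

theorem mem_KTSet_of_mem_parSum {x : PiLp 2 H} {v : ∀ k, G k}
    (hv : ∀ k, v k ∈ parSum (svAdd (Bm k) (fun w => Bc k w + Bl k w))
      (svAdd (Dm k) (fun w => Dc k w + Dl k w)) ((∑ j, L k j (x j)) - r k))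
    (hx : ∀ i, s i - C i (x i) - Q i (x i) - R i x
      - ∑ k, ContinuousLinearMap.adjoint (L k i) (v k) ∈ A i (x i)) :
    (x, WithLp.toLp 2 v) ∈ KTSet s r A C Q R Bm Bc Bl Dm Dc Dl L := by
  refine ⟨fun i => ?_, fun k => mem_parSum_iff.mp (hv k)⟩
  convert hx i using 1
  abel

end KuhnTucker

theorem KT_nonempty_of_primal_nonempty_of_singleton_general
    [Fintype I] [Fintype K] [Nonempty I]
    [∀ i, NormedAddCommGroup (H i)] [∀ i, InnerProductSpace ℝ (H i)]
    [∀ i, CompleteSpace (H i)]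
    [∀ k, NormedAddCommGroup (G k)] [∀ k, InnerProductSpace ℝ (G k)]
    [∀ k, CompleteSpace (G k)]
    (s : ∀ i, H i) (r : ∀ k, G k)
    (A : ∀ i, H i → Set (H i))
    (C : ∀ i, H i → H i)
    (Q : ∀ i, H i → H i)
    (R : ∀ i, PiLp 2 H → H i)
    (Bm : ∀ k, G k → Set (G k))
    (Bc : ∀ k, G k → G k)
    (Bl : ∀ k, G k → G k)
    (Dm : ∀ k, G k → Set (G k))
    (Dc : ∀ k, G k → G k)
    (Dl : ∀ k, G k → G k)
    (L : ∀ k i, H i →L[ℝ] G k)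
    (hsingleton : ∀ i j : I, i = j)
    (hP : (PrimalSol s r A C Q R Bm Bc Bl Dm Dc Dl L).Nonempty) :
    (KTSet s r A C Q R Bm Bc Bl Dm Dc Dl L).Nonempty := by
  obtain ⟨x, hx⟩ := hP
  let i₀ : I := Classical.arbitrary I
  obtain ⟨v, hv, hxi₀⟩ := hx i₀
  exact ⟨_, mem_KTSet_of_mem_parSum hv fun i => hsingleton i₀ i ▸ hxi₀⟩

/-- In the setting of Problem 1, if the index set `I` is a singleton,
then nonemptiness of the primal solution set `𝒫` implies nonemptiness of the
Kuhn–Tucker set `Z`. -/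
theorem KT_nonempty_of_primal_nonempty_of_singleton
    [Fintype I] [Fintype K] [Nonempty I] [Nonempty K]
    [∀ i, NormedAddCommGroup (H i)] [∀ i, InnerProductSpace ℝ (H i)]
    [∀ i, CompleteSpace (H i)]
    [∀ k, NormedAddCommGroup (G k)] [∀ k, InnerProductSpace ℝ (G k)]
    [∀ k, CompleteSpace (G k)]
    (s : ∀ i, H i) (r : ∀ k, G k)
    (A : ∀ i, H i → Set (H i)) (hA : ∀ i, IsMaxMonotoneOp (A i))
    (C : ∀ i, H i → H i) (αc : I → ℝ) (hαc : ∀ i, 0 < αc i)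
    (hC : ∀ i, IsCocoercive (C i) (αc i))
    (Q : ∀ i, H i → H i) (αl : I → ℝ) (hαl : ∀ i, 0 ≤ αl i)
    (hQm : ∀ i, IsMonotoneMap (Q i)) (hQl : ∀ i, IsLipschitzMap (Q i) (αl i))
    (R : ∀ i, PiLp 2 H → H i) (χ : ℝ) (hχ : 0 ≤ χ)
    (hRm : IsMonotoneMap (fun x : PiLp 2 H => (WithLp.toLp 2 (fun i => R i x) : PiLp 2 H)))
    (hRl : IsLipschitzMap (fun x : PiLp 2 H => (WithLp.toLp 2 (fun i => R i x) : PiLp 2 H)) χ)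
    (Bm : ∀ k, G k → Set (G k)) (hBm : ∀ k, IsMaxMonotoneOp (Bm k))
    (Bc : ∀ k, G k → G k) (βc : K → ℝ) (hβc : ∀ k, 0 < βc k)
    (hBc : ∀ k, IsCocoercive (Bc k) (βc k))
    (Bl : ∀ k, G k → G k) (βl : K → ℝ) (hβl : ∀ k, 0 ≤ βl k)
    (hBlm : ∀ k, IsMonotoneMap (Bl k)) (hBll : ∀ k, IsLipschitzMap (Bl k) (βl k))
    (Dm : ∀ k, G k → Set (G k)) (hDm : ∀ k, IsMaxMonotoneOp (Dm k))
    (Dc : ∀ k, G k → G k) (δc : K → ℝ) (hδc : ∀ k, 0 < δc k)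
    (hDc : ∀ k, IsCocoercive (Dc k) (δc k))
    (Dl : ∀ k, G k → G k) (δl : K → ℝ) (hδl : ∀ k, 0 ≤ δl k)
    (hDlm : ∀ k, IsMonotoneMap (Dl k)) (hDll : ∀ k, IsLipschitzMap (Dl k) (δl k))
    (L : ∀ k i, H i →L[ℝ] G k)
    (hsingleton : ∀ i j : I, i = j)
    (hP : (PrimalSol s r A C Q R Bm Bc Bl Dm Dc Dl L).Nonempty) :
    (KTSet s r A C Q R Bm Bc Bl Dm Dc Dl L).Nonempty :=
  KT_nonempty_of_primal_nonempty_of_singleton_general s r A C Q R Bm Bc Bl Dm Dc Dl L hsingleton hP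

end
end

section
/- In the setting of Problem 1, suppose that I ⊆ K, that for every k ∈ K∖I the parallel sum (B_k^m+B_k^c+B_k^l) □ (D_k^m+D_k^c+D_k^l) is at most single-valued, and that L_{ki} = 0 whenever i ∈ I and k ∈ I with k ≠ i. Then nonemptiness of the primal solution set 𝒫 implies nonemptiness of the Kuhn–Tucker set Z. -/
/-!
Statement 6: In the setting of Problem 1 with `I ⊆ K` (and `Gᵢ = Hᵢ` for `i ∈ I`),
if the parallel sums indexed by `K ∖ I` are at most single-valued and `Lₖᵢ = 0` for
`i, k ∈ I` with `k ≠ i`, then `𝒫 ≠ ∅` implies `Z ≠ ∅`.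
-/

open scoped RealInnerProductSpace Pointwise
open Filter Topology

noncomputable section

universe u

variable {I K : Type*}

variable {H : I → Type u} {G : K → Type u}

/-- In the setting of Problem 1, suppose `I ⊆ K` (with `Hᵢ = Gᵢ` for
`i ∈ I`), that for every `k ∈ K ∖ I` the parallel sum
`(Bₖᵐ+Bₖᶜ+Bₖˡ) □ (Dₖᵐ+Dₖᶜ+Dₖˡ)` is at most single-valued, and that `Lₖᵢ = 0` whenever
`i ∈ I` and `k ∈ I` with `k ≠ i`.  Then `𝒫 ≠ ∅` implies `Z ≠ ∅`. -/
theorem KT_nonempty_of_primal_nonempty_of_I_subset_K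
    {K : Type*} [Fintype K] [Nonempty K]
    {G : K → Type u} [∀ k, NormedAddCommGroup (G k)] [∀ k, InnerProductSpace ℝ (G k)]
    [∀ k, CompleteSpace (G k)]
    (Iset : Finset K) (hIne : Iset.Nonempty)
    (s : ∀ i : Iset, G i.1) (r : ∀ k, G k)
    (A : ∀ i : Iset, G i.1 → Set (G i.1)) (hA : ∀ i, IsMaxMonotoneOp (A i))
    (C : ∀ i : Iset, G i.1 → G i.1) (αc : Iset → ℝ) (hαc : ∀ i, 0 < αc i)
    (hC : ∀ i, IsCocoercive (C i) (αc i))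
    (Q : ∀ i : Iset, G i.1 → G i.1) (αl : Iset → ℝ) (hαl : ∀ i, 0 ≤ αl i)
    (hQm : ∀ i, IsMonotoneMap (Q i)) (hQl : ∀ i, IsLipschitzMap (Q i) (αl i))
    (R : ∀ i : Iset, PiLp 2 (fun i : Iset => G i.1) → G i.1) (χ : ℝ) (hχ : 0 ≤ χ)
    (hRm : IsMonotoneMap (fun x : PiLp 2 (fun i : Iset => G i.1) =>
      (WithLp.toLp 2 (fun i => R i x) : PiLp 2 (fun i : Iset => G i.1))))
    (hRl : IsLipschitzMap (fun x : PiLp 2 (fun i : Iset => G i.1) =>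
      (WithLp.toLp 2 (fun i => R i x) : PiLp 2 (fun i : Iset => G i.1))) χ)
    (Bm : ∀ k, G k → Set (G k)) (hBm : ∀ k, IsMaxMonotoneOp (Bm k))
    (Bc : ∀ k, G k → G k) (βc : K → ℝ) (hβc : ∀ k, 0 < βc k)
    (hBc : ∀ k, IsCocoercive (Bc k) (βc k))
    (Bl : ∀ k, G k → G k) (βl : K → ℝ) (hβl : ∀ k, 0 ≤ βl k)
    (hBlm : ∀ k, IsMonotoneMap (Bl k)) (hBll : ∀ k, IsLipschitzMap (Bl k) (βl k))
    (Dm : ∀ k, G k → Set (G k)) (hDm : ∀ k, IsMaxMonotoneOp (Dm k))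
    (Dc : ∀ k, G k → G k) (δc : K → ℝ) (hδc : ∀ k, 0 < δc k)
    (hDc : ∀ k, IsCocoercive (Dc k) (δc k))
    (Dl : ∀ k, G k → G k) (δl : K → ℝ) (hδl : ∀ k, 0 ≤ δl k)
    (hDlm : ∀ k, IsMonotoneMap (Dl k)) (hDll : ∀ k, IsLipschitzMap (Dl k) (δl k))
    (L : ∀ k (i : Iset), G i.1 →L[ℝ] G k)
    (hL0 : ∀ i k : Iset, (k : K) ≠ (i : K) → L (k : K) i = 0)
    (hsv : ∀ k : K, k ∉ Iset → ∀ w : G k,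
      Set.Subsingleton (parSum (svAdd (Bm k) (fun u => Bc k u + Bl k u))
        (svAdd (Dm k) (fun u => Dc k u + Dl k u)) w))
    (hP : (PrimalSol s r A C Q R Bm Bc Bl Dm Dc Dl L).Nonempty) :
    (KTSet s r A C Q R Bm Bc Bl Dm Dc Dl L).Nonempty := by
  classical
  obtain ⟨xb, hxb⟩ := hP
  choose u hu hAin using hxb
  obtain ⟨i0, hi0⟩ := hIne
  let i₀ : Iset := ⟨i0, hi0⟩
  let v : ∀ k, G k := fun k => if h : k ∈ Iset then u ⟨k, h⟩ k else u i₀ k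
  have huu : ∀ (i i' : Iset) (k : K), k ∉ Iset → u i k = u i' k := fun i i' k hk =>
    hsv k hk _ (hu i k) (hu i' k)
  have hvmem : ∀ k, v k ∈ parSum (svAdd (Bm k) (fun w => Bc k w + Bl k w))
      (svAdd (Dm k) (fun w => Dc k w + Dl k w)) ((∑ j, L k j (xb j)) - r k) := by
    intro k
    by_cases h : k ∈ Iset
    · simpa only [v, dif_pos h] using hu ⟨k, h⟩ k
    · simpa only [v, dif_neg h] using hu i₀ k
  refine ⟨(xb, WithLp.toLp 2 v), ?_, fun k => hvmem k⟩
  intro i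
  have hsum : ∑ j, ContinuousLinearMap.adjoint (L j i) (v j)
      = ∑ k, ContinuousLinearMap.adjoint (L k i) (u i k) := by
    refine Finset.sum_congr rfl (fun j _ => ?_)
    by_cases hj : j ∈ Iset
    · by_cases hji : j = (i : K)
      · subst hji
        simp only [v, dif_pos hj]
      · rw [hL0 i ⟨j, hj⟩ hji]
        simp
    · simp only [v, dif_neg hj, huu i₀ i j hj]
  have h1 := hAin i
  have heq : s i - (∑ j, ContinuousLinearMap.adjoint (L j i) (v j))
      - C i (xb i) - Q i (xb i) - R i xb
      = s i - C i (xb i) - Q i (xb i) - R i xb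
        - ∑ k, ContinuousLinearMap.adjoint (L k i) (u i k) := by
    rw [hsum]; abel
  rw [heq]
  exact h1


end
end

section
/- In the setting of Problem 1, let (p, p*) ∈ gra M and q ∈ 𝗫. Then every zero z of the saddle operator S satisfies ⟨z − p, p* + Cq⟩ ≤ (4α)⁻¹‖p − q‖², where α = min{α_i^c, β_k^c, δ_k^c : i∈I, k∈K}. -/
/-!
Statement 8: In the setting of Problem 1, if `(p, p*) ∈ gra M` and `q ∈ 𝗫`, then every
zero `z` of the saddle operator `S` satisfies
`⟪z − p, p* + 𝗖q⟫ ≤ (4α)⁻¹ ‖p − q‖²`, where `α = min {αᵢᶜ, βₖᶜ, δₖᶜ}`.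
-/

open scoped RealInnerProductSpace Pointwise
open Filter Topology

noncomputable section

universe u

variable {I K : Type*}

variable {H : I → Type u} {G : K → Type u}

/-- Build a point of `𝗫` from its four components. -/
def mkX (x : PiLp 2 H) (y z v : PiLp 2 G) : PiLp 2 (XFam H G) := WithLp.toLp 2 (fun st =>
  match st with
  | Sum.inl i => x i
  | Sum.inr (Sum.inl k) => y k
  | Sum.inr (Sum.inr (Sum.inl k)) => z k
  | Sum.inr (Sum.inr (Sum.inr k)) => v k : ∀ st, XFam H G st)

/-- The cocoercive part `𝗖 : 𝗫 → 𝗫 : (x,y,z,v*) ↦ ((Cᵢxᵢ)ᵢ, (Bₖᶜyₖ)ₖ, (Dₖᶜzₖ)ₖ, 0)`. -/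
def CopX [∀ i, NormedAddCommGroup (H i)] [∀ k, NormedAddCommGroup (G k)]
    (C : ∀ i, H i → H i) (Bc Dc : ∀ k, G k → G k) :
    PiLp 2 (XFam H G) → PiLp 2 (XFam H G) := fun w =>
  mkX (WithLp.toLp 2 (fun i => C i (Xx w i))) (WithLp.toLp 2 (fun k => Bc k (Xy w k)))
    (WithLp.toLp 2 (fun k => Dc k (Xz w k))) 0

/-- The operator `𝗠`, i.e. the saddle operator with the cocoercive parts removed. -/
def Mop [Fintype I] [Fintype K]
    [∀ i, NormedAddCommGroup (H i)] [∀ i, InnerProductSpace ℝ (H i)]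
    [∀ i, CompleteSpace (H i)]
    [∀ k, NormedAddCommGroup (G k)] [∀ k, InnerProductSpace ℝ (G k)]
    [∀ k, CompleteSpace (G k)]
    (s : ∀ i, H i) (r : ∀ k, G k)
    (A : ∀ i, H i → Set (H i)) (Q : ∀ i, H i → H i) (R : ∀ i, PiLp 2 H → H i)
    (Bm : ∀ k, G k → Set (G k)) (Bl : ∀ k, G k → G k)
    (Dm : ∀ k, G k → Set (G k)) (Dl : ∀ k, G k → G k)
    (L : ∀ k i, H i →L[ℝ] G k) :
    PiLp 2 (XFam H G) → Set (PiLp 2 (XFam H G)) := fun w =>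
  {w' |
    (∀ i, Xx w' i + s i - Q i (Xx w i) - R i (Xx w)
        - ∑ k, ContinuousLinearMap.adjoint (L k i) (Xv w k) ∈ A i (Xx w i)) ∧
    (∀ k, Xy w' k - Bl k (Xy w k) + Xv w k ∈ Bm k (Xy w k)) ∧
    (∀ k, Xz w' k - Dl k (Xz w k) + Xv w k ∈ Dm k (Xz w k)) ∧
    (∀ k, Xv w' k = r k + Xy w k + Xz w k - ∑ i, L k i (Xx w i))}

/-!
If `z` is a zero of `S = 𝗠 + 𝗖`, then `-𝗖z ∈ 𝗠z`, and monotonicity of `𝗠` against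
`(p, p*)` gives `⟪z - p, p* + 𝗖z⟫ ≤ 0`; the couplings `Lₖᵢ` and `±vₖ*` cancel in `𝗠` because
they form a skew operator. Replacing `𝗖z` by `𝗖q` costs
`⟪q - p, 𝗖q - 𝗖z⟫ - ⟪q - z, 𝗖q - 𝗖z⟫ ≤ ‖p - q‖ t - α t²` with `t = ‖𝗖q - 𝗖z‖`,
by Cauchy–Schwarz and `α`-cocoercivity of `𝗖`, and `‖p - q‖ t - α t² ≤ ‖p - q‖² / (4α)`.
-/

section Abstract

variable {E : Type*} [NormedAddCommGroup E] [InnerProductSpace ℝ E]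

theorem IsCocoercive.mono {T : E → E} {α β : ℝ} (hT : IsCocoercive T α) (hβ : β ≤ α) :
    IsCocoercive T β := fun x y =>
  (mul_le_mul_of_nonneg_right hβ (sq_nonneg _)).trans (hT x y)

theorem IsMonotoneOp.inner_nonneg_of_sub_mem {A : E → Set E} {Q : E → E}
    (hA : IsMonotoneOp A) (hQ : IsMonotoneMap Q) {x y a b : E}
    (hx : a - Q x ∈ A x) (hy : b - Q y ∈ A y) : 0 ≤ ⟪x - y, a - b⟫ := by
  have h := hA hx hy
  have e : a - Q x - (b - Q y) = (a - b) - (Q x - Q y) := by abel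
  rw [e, inner_sub_right] at h
  linarith [hQ x y]

theorem IsMonotoneOp.inner_add_nonneg_of_sub_add_mem {B : E → Set E} {P : E → E}
    (hB : IsMonotoneOp B) (hP : IsMonotoneMap P) {y y' b b' v v' : E} (hy : b - P y + v ∈ B y)
    (hy' : b' - P y' + v' ∈ B y') : 0 ≤ ⟪y - y', b - b' + (v - v')⟫ := by
  rw [← add_sub_add_comm]
  rw [sub_add_eq_add_sub] at hy hy'
  exact hB.inner_nonneg_of_sub_mem hP hy hy'

theorem IsMonotoneOp.inner_add_cocoercive_le {M : E → Set E} {T : E → E} {α : ℝ}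
    (hM : IsMonotoneOp M) (hT : IsCocoercive T α) (hα : 0 < α) {p p' q z : E}
    (hp : p' ∈ M p) (hz : -T z ∈ M z) :
    ⟪z - p, p' + T q⟫ ≤ (4 * α)⁻¹ * ‖p - q‖ ^ 2 := by
  have hzp : ⟪z - p, p' + T z⟫ ≤ 0 := by
    have h := hM hz hp
    rw [show -T z - p' = -(p' + T z) by abel, inner_neg_right] at h
    linarith
  have hsplit : ⟪z - p, p' + T q⟫
      = ⟪z - p, p' + T z⟫ + ⟪q - p, T q - T z⟫ - ⟪q - z, T q - T z⟫ := by
    rw [add_sub_assoc, ← inner_sub_left, sub_sub_sub_cancel_left, ← inner_add_right]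
    congr 1
    abel
  have hcs : ⟪q - p, T q - T z⟫ ≤ ‖p - q‖ * ‖T q - T z‖ := by
    rw [norm_sub_rev p q]
    exact real_inner_le_norm _ _
  have hquad : ‖p - q‖ * ‖T q - T z‖ - α * ‖T q - T z‖ ^ 2 ≤ (4 * α)⁻¹ * ‖p - q‖ ^ 2 := by
    rw [inv_mul_eq_div, le_div_iff₀ (by positivity)]
    nlinarith [sq_nonneg (‖p - q‖ - 2 * α * ‖T q - T z‖)]
  linarith [hT q z]

end Abstract

section Components

variable [∀ i, NormedAddCommGroup (H i)] [∀ k, NormedAddCommGroup (G k)]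

@[simp] theorem Xx_sub (u v : PiLp 2 (XFam H G)) (i : I) : Xx (u - v) i = Xx u i - Xx v i := rfl
@[simp] theorem Xy_sub (u v : PiLp 2 (XFam H G)) (k : K) : Xy (u - v) k = Xy u k - Xy v k := rfl
@[simp] theorem Xz_sub (u v : PiLp 2 (XFam H G)) (k : K) : Xz (u - v) k = Xz u k - Xz v k := rfl
@[simp] theorem Xv_sub (u v : PiLp 2 (XFam H G)) (k : K) : Xv (u - v) k = Xv u k - Xv v k := rfl

variable (C : ∀ i, H i → H i) (Bc Dc : ∀ k, G k → G k) (w : PiLp 2 (XFam H G))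

@[simp] theorem Xx_CopX (i : I) : Xx (CopX C Bc Dc w) i = C i (Xx w i) := rfl
@[simp] theorem Xy_CopX (k : K) : Xy (CopX C Bc Dc w) k = Bc k (Xy w k) := rfl
@[simp] theorem Xz_CopX (k : K) : Xz (CopX C Bc Dc w) k = Dc k (Xz w k) := rfl
@[simp] theorem Xv_CopX (k : K) : Xv (CopX C Bc Dc w) k = 0 := rfl

theorem norm_sq_XFam [Fintype I] [Fintype K] (u : PiLp 2 (XFam H G)) :
    ‖u‖ ^ 2 = ∑ i, ‖Xx u i‖ ^ 2 + ∑ k, ‖Xy u k‖ ^ 2 + ∑ k, ‖Xz u k‖ ^ 2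
      + ∑ k, ‖Xv u k‖ ^ 2 := by
  rw [PiLp.norm_sq_eq_of_L2, Fintype.sum_sum_type, Fintype.sum_sum_type, Fintype.sum_sum_type]
  simp only [add_assoc]
  rfl

end Components

section InnerProduct

variable [Fintype I] [Fintype K]
  [∀ i, NormedAddCommGroup (H i)] [∀ i, InnerProductSpace ℝ (H i)]
  [∀ k, NormedAddCommGroup (G k)] [∀ k, InnerProductSpace ℝ (G k)]

theorem inner_XFam (u v : PiLp 2 (XFam H G)) :
    ⟪u, v⟫ = ∑ i, ⟪Xx u i, Xx v i⟫ + ∑ k, ⟪Xy u k, Xy v k⟫ + ∑ k, ⟪Xz u k, Xz v k⟫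
      + ∑ k, ⟪Xv u k, Xv v k⟫ := by
  rw [PiLp.inner_apply, Fintype.sum_sum_type, Fintype.sum_sum_type, Fintype.sum_sum_type]
  simp only [add_assoc]
  rfl

theorem isCocoercive_CopX {C : ∀ i, H i → H i} {Bc Dc : ∀ k, G k → G k} {α : ℝ}
    (hC : ∀ i, IsCocoercive (C i) α) (hBc : ∀ k, IsCocoercive (Bc k) α)
    (hDc : ∀ k, IsCocoercive (Dc k) α) : IsCocoercive (CopX C Bc Dc) α := by
  intro x y
  rw [norm_sq_XFam, inner_XFam]
  simp only [Xx_sub, Xy_sub, Xz_sub, Xv_sub, Xx_CopX, Xy_CopX, Xz_CopX, Xv_CopX, sub_zero,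
    norm_zero, zero_pow two_ne_zero, inner_zero_right, Finset.sum_const_zero, add_zero, mul_add,
    Finset.mul_sum]
  gcongr with i _ k _ k _
  · exact hC i _ _
  · exact hBc k _ _
  · exact hDc k _ _

end InnerProduct

section Saddle

variable [Fintype I] [Fintype K]
  [∀ i, NormedAddCommGroup (H i)] [∀ i, InnerProductSpace ℝ (H i)] [∀ i, CompleteSpace (H i)]
  [∀ k, NormedAddCommGroup (G k)] [∀ k, InnerProductSpace ℝ (G k)] [∀ k, CompleteSpace (G k)]
  {s : ∀ i, H i} {r : ∀ k, G k} {A : ∀ i, H i → Set (H i)} {Q : ∀ i, H i → H i}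
  {R : ∀ i, PiLp 2 H → H i} {Bm Dm : ∀ k, G k → Set (G k)} {Bl Dl : ∀ k, G k → G k}
  {L : ∀ k i, H i →L[ℝ] G k} {w w' u u' : PiLp 2 (XFam H G)}

theorem sub_CopX_mem_Mop_of_mem_SaddleOp {C : ∀ i, H i → H i} {Bc Dc : ∀ k, G k → G k}
    (h : u ∈ SaddleOp s r A C Q R Bm Bc Bl Dm Dc Dl L w) :
    u - CopX C Bc Dc w ∈ Mop s r A Q R Bm Bl Dm Dl L w := by
  obtain ⟨hx, hy, hz, hv⟩ := h
  refine ⟨fun i => ?_, fun k => ?_, fun k => ?_, fun k => ?_⟩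
  · convert hx i using 1
    simp only [Xx_sub, Xx_CopX]
    abel
  · exact hy k
  · exact hz k
  · simpa only [Xv_sub, Xv_CopX, sub_zero] using hv k

theorem inner_Xx_le_of_mem_Mop (hA : ∀ i, IsMonotoneOp (A i)) (hQ : ∀ i, IsMonotoneMap (Q i))
    (hu : u ∈ Mop s r A Q R Bm Bl Dm Dl L w) (hu' : u' ∈ Mop s r A Q R Bm Bl Dm Dl L w')
    (i : I) :
    ⟪Xx w i - Xx w' i, R i (Xx w) - R i (Xx w')⟫
        + ∑ k, ⟪Xv w k - Xv w' k, L k i (Xx w i - Xx w' i)⟫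
      ≤ ⟪Xx w i - Xx w' i, Xx u i - Xx u' i⟫ := by
  have h := hA i (hu.1 i) (hu'.1 i)
  have e : Xx u i + s i - Q i (Xx w i) - R i (Xx w)
        - ∑ k, ContinuousLinearMap.adjoint (L k i) (Xv w k)
      - (Xx u' i + s i - Q i (Xx w' i) - R i (Xx w')
        - ∑ k, ContinuousLinearMap.adjoint (L k i) (Xv w' k))
      = (Xx u i - Xx u' i) - (Q i (Xx w i) - Q i (Xx w' i)) - (R i (Xx w) - R i (Xx w'))
        - ∑ k, ContinuousLinearMap.adjoint (L k i) (Xv w k - Xv w' k) := by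
    simp only [map_sub, Finset.sum_sub_distrib]
    abel
  rw [e, inner_sub_right, inner_sub_right, inner_sub_right, inner_sum] at h
  simp only [ContinuousLinearMap.adjoint_inner_right, real_inner_comm (Xv w _ - Xv w' _)] at h
  linarith [hQ i (Xx w i) (Xx w' i)]

theorem inner_Xv_eq_of_mem_Mop (hu : u ∈ Mop s r A Q R Bm Bl Dm Dl L w)
    (hu' : u' ∈ Mop s r A Q R Bm Bl Dm Dl L w') (k : K) :
    ⟪Xv w k - Xv w' k, Xv u k - Xv u' k⟫
      = ⟪Xy w k - Xy w' k, Xv w k - Xv w' k⟫ + ⟪Xz w k - Xz w' k, Xv w k - Xv w' k⟫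
        - ∑ i, ⟪Xv w k - Xv w' k, L k i (Xx w i - Xx w' i)⟫ := by
  have hd : Xv u k - Xv u' k
      = (Xy w k - Xy w' k) + (Xz w k - Xz w' k) - ∑ i, L k i (Xx w i - Xx w' i) := by
    rw [hu.2.2.2 k, hu'.2.2.2 k]
    simp only [map_sub, Finset.sum_sub_distrib]
    abel
  rw [hd, inner_sub_right, inner_add_right, inner_sum, real_inner_comm (Xy w k - Xy w' k),
    real_inner_comm (Xz w k - Xz w' k)]

theorem isMonotoneOp_Mop (hA : ∀ i, IsMonotoneOp (A i)) (hQ : ∀ i, IsMonotoneMap (Q i))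
    (hR : IsMonotoneMap (fun x : PiLp 2 H => (WithLp.toLp 2 (fun i => R i x) : PiLp 2 H)))
    (hBm : ∀ k, IsMonotoneOp (Bm k)) (hBl : ∀ k, IsMonotoneMap (Bl k))
    (hDm : ∀ k, IsMonotoneOp (Dm k)) (hDl : ∀ k, IsMonotoneMap (Dl k)) :
    IsMonotoneOp (Mop s r A Q R Bm Bl Dm Dl L) := by
  intro w u w' u' hu hu'
  have hx := Finset.sum_le_sum fun i (_ : i ∈ Finset.univ) =>
    inner_Xx_le_of_mem_Mop hA hQ hu hu' i
  have hy := Finset.sum_nonneg fun k (_ : k ∈ Finset.univ) =>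
    (hBm k).inner_add_nonneg_of_sub_add_mem (hBl k) (hu.2.1 k) (hu'.2.1 k)
  have hz := Finset.sum_nonneg fun k (_ : k ∈ Finset.univ) =>
    (hDm k).inner_add_nonneg_of_sub_add_mem (hDl k) (hu.2.2.1 k) (hu'.2.2.1 k)
  have hRsum : 0 ≤ ∑ i, ⟪Xx w i - Xx w' i, R i (Xx w) - R i (Xx w')⟫ :=
    (hR (Xx w) (Xx w')).trans_eq (PiLp.inner_apply _ _)
  rw [inner_XFam]
  simp only [Xx_sub, Xy_sub, Xz_sub, Xv_sub, inner_Xv_eq_of_mem_Mop hu hu']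
  simp only [inner_add_right, Finset.sum_add_distrib, Finset.sum_sub_distrib] at hx hy hz ⊢
  rw [Finset.sum_comm] at hx
  linarith

end Saddle

theorem zer_saddleOp_subset_halfspace_general
    [Fintype I] [Fintype K] [Nonempty I] [Nonempty K]
    [∀ i, NormedAddCommGroup (H i)] [∀ i, InnerProductSpace ℝ (H i)]
    [∀ i, CompleteSpace (H i)]
    [∀ k, NormedAddCommGroup (G k)] [∀ k, InnerProductSpace ℝ (G k)]
    [∀ k, CompleteSpace (G k)]
    (s : ∀ i, H i) (r : ∀ k, G k)
    (A : ∀ i, H i → Set (H i)) (hA : ∀ i, IsMaxMonotoneOp (A i))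
    (C : ∀ i, H i → H i) (αc : I → ℝ) (hαc : ∀ i, 0 < αc i)
    (hC : ∀ i, IsCocoercive (C i) (αc i))
    (Q : ∀ i, H i → H i)
    (hQm : ∀ i, IsMonotoneMap (Q i))
    (R : ∀ i, PiLp 2 H → H i)
    (hRm : IsMonotoneMap (fun x : PiLp 2 H => (WithLp.toLp 2 (fun i => R i x) : PiLp 2 H)))
    (Bm : ∀ k, G k → Set (G k)) (hBm : ∀ k, IsMaxMonotoneOp (Bm k))
    (Bc : ∀ k, G k → G k) (βc : K → ℝ) (hβc : ∀ k, 0 < βc k)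
    (hBc : ∀ k, IsCocoercive (Bc k) (βc k))
    (Bl : ∀ k, G k → G k)
    (hBlm : ∀ k, IsMonotoneMap (Bl k))
    (Dm : ∀ k, G k → Set (G k)) (hDm : ∀ k, IsMaxMonotoneOp (Dm k))
    (Dc : ∀ k, G k → G k) (δc : K → ℝ) (hδc : ∀ k, 0 < δc k)
    (hDc : ∀ k, IsCocoercive (Dc k) (δc k))
    (Dl : ∀ k, G k → G k)
    (hDlm : ∀ k, IsMonotoneMap (Dl k))
    (L : ∀ k i, H i →L[ℝ] G k)
    (α : ℝ) (hα : α = min (⨅ i, αc i) (min (⨅ k, βc k) (⨅ k, δc k)))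
    (p pstar q : PiLp 2 (XFam H G))
    (hp : pstar ∈ Mop s r A Q R Bm Bl Dm Dl L p) :
    ∀ z, 0 ∈ SaddleOp s r A C Q R Bm Bc Bl Dm Dc Dl L z →
      ⟪z - p, pstar + CopX C Bc Dc q⟫ ≤ (4 * α)⁻¹ * ‖p - q‖ ^ 2 := by
  intro z hz
  have hα0 : 0 < α := by
    obtain ⟨i, hi⟩ := exists_eq_ciInf_of_finite (f := αc)
    obtain ⟨k, hk⟩ := exists_eq_ciInf_of_finite (f := βc)
    obtain ⟨k', hk'⟩ := exists_eq_ciInf_of_finite (f := δc)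
    rw [hα, ← hi, ← hk, ← hk']
    exact lt_min (hαc i) (lt_min (hβc k) (hδc k'))
  have hCop : IsCocoercive (CopX C Bc Dc) α := by
    refine isCocoercive_CopX (fun i => (hC i).mono ?_) (fun k => (hBc k).mono ?_)
      (fun k => (hDc k).mono ?_) <;> rw [hα]
    · exact (min_le_left _ _).trans (ciInf_le (Finite.bddBelow_range αc) i)
    · exact (min_le_right _ _).trans <| (min_le_left _ _).trans <|
        ciInf_le (Finite.bddBelow_range βc) k
    · exact (min_le_right _ _).trans <| (min_le_right _ _).trans <|
        ciInf_le (Finite.bddBelow_range δc) k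
  have hM : IsMonotoneOp (Mop s r A Q R Bm Bl Dm Dl L) :=
    isMonotoneOp_Mop (fun i => (hA i).1) hQm hRm (fun k => (hBm k).1) hBlm (fun k => (hDm k).1)
      hDlm
  exact hM.inner_add_cocoercive_le hCop hα0 hp
    (by simpa only [zero_sub] using sub_CopX_mem_Mop_of_mem_SaddleOp hz)

/-- In the setting of Problem 1, let `(p, p*) ∈ gra 𝗠` and `q ∈ 𝗫`.
Then every zero `z` of the saddle operator `S` satisfies
`⟪z − p, p* + 𝗖q⟫ ≤ (4α)⁻¹ ‖p − q‖²` with `α = min {αᵢᶜ, βₖᶜ, δₖᶜ}`. -/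
theorem zer_saddleOp_subset_halfspace
    [Fintype I] [Fintype K] [Nonempty I] [Nonempty K]
    [∀ i, NormedAddCommGroup (H i)] [∀ i, InnerProductSpace ℝ (H i)]
    [∀ i, CompleteSpace (H i)]
    [∀ k, NormedAddCommGroup (G k)] [∀ k, InnerProductSpace ℝ (G k)]
    [∀ k, CompleteSpace (G k)]
    (s : ∀ i, H i) (r : ∀ k, G k)
    (A : ∀ i, H i → Set (H i)) (hA : ∀ i, IsMaxMonotoneOp (A i))
    (C : ∀ i, H i → H i) (αc : I → ℝ) (hαc : ∀ i, 0 < αc i)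
    (hC : ∀ i, IsCocoercive (C i) (αc i))
    (Q : ∀ i, H i → H i) (αl : I → ℝ) (hαl : ∀ i, 0 ≤ αl i)
    (hQm : ∀ i, IsMonotoneMap (Q i)) (hQl : ∀ i, IsLipschitzMap (Q i) (αl i))
    (R : ∀ i, PiLp 2 H → H i) (χ : ℝ) (hχ : 0 ≤ χ)
    (hRm : IsMonotoneMap (fun x : PiLp 2 H => (WithLp.toLp 2 (fun i => R i x) : PiLp 2 H)))
    (hRl : IsLipschitzMap (fun x : PiLp 2 H => (WithLp.toLp 2 (fun i => R i x) : PiLp 2 H)) χ)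
    (Bm : ∀ k, G k → Set (G k)) (hBm : ∀ k, IsMaxMonotoneOp (Bm k))
    (Bc : ∀ k, G k → G k) (βc : K → ℝ) (hβc : ∀ k, 0 < βc k)
    (hBc : ∀ k, IsCocoercive (Bc k) (βc k))
    (Bl : ∀ k, G k → G k) (βl : K → ℝ) (hβl : ∀ k, 0 ≤ βl k)
    (hBlm : ∀ k, IsMonotoneMap (Bl k)) (hBll : ∀ k, IsLipschitzMap (Bl k) (βl k))
    (Dm : ∀ k, G k → Set (G k)) (hDm : ∀ k, IsMaxMonotoneOp (Dm k))
    (Dc : ∀ k, G k → G k) (δc : K → ℝ) (hδc : ∀ k, 0 < δc k)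
    (hDc : ∀ k, IsCocoercive (Dc k) (δc k))
    (Dl : ∀ k, G k → G k) (δl : K → ℝ) (hδl : ∀ k, 0 ≤ δl k)
    (hDlm : ∀ k, IsMonotoneMap (Dl k)) (hDll : ∀ k, IsLipschitzMap (Dl k) (δl k))
    (L : ∀ k i, H i →L[ℝ] G k)
    (α : ℝ) (hα : α = min (⨅ i, αc i) (min (⨅ k, βc k) (⨅ k, δc k)))
    (p pstar q : PiLp 2 (XFam H G))
    (hp : pstar ∈ Mop s r A Q R Bm Bl Dm Dl L p) :
    ∀ z, 0 ∈ SaddleOp s r A C Q R Bm Bc Bl Dm Dc Dl L z →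
      ⟪z - p, pstar + CopX C Bc Dc q⟫ ≤ (4 * α)⁻¹ * ‖p - q‖ ^ 2 :=
  zer_saddleOp_subset_halfspace_general s r A hA C αc hαc hC Q hQm R hRm Bm hBm Bc βc hβc hBc Bl
    hBlm Dm hDm Dc δc hδc hDc Dl hDlm L α hα p pstar q hp

end
end

section
/- In the setting of Problem 2, suppose the Kuhn–Tucker condition (KT) holds and that, for every k ∈ K, 0 ∈ sri(dom g_k* + dom ψ_k* − dom h_k*). Then, for every k ∈ K, the set epi(g_k+ψ_k) + epi h_k is closed in G_k × ℝ. -/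
/-!
Statement 15 (Proposition 95, case [a]): In the setting of Problem 2, if the
Kuhn–Tucker condition (KT) holds and `0 ∈ sri (dom gₖ* + dom ψₖ* − dom hₖ*)` for every
`k ∈ K`, then `epi (gₖ+ψₖ) + epi hₖ` is closed for every `k ∈ K`.
-/

open scoped RealInnerProductSpace Pointwise
open Filter

noncomputable section

instance PiLpCompleteSpace {ι : Type*} (p : ENNReal) (α : ι → Type*)
    [∀ i, UniformSpace (α i)] [∀ i, CompleteSpace (α i)] : CompleteSpace (PiLp p α) :=
  PiLp.completeSpace p α

/-- Convexity of an `EReal`-valued function. -/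
def ERealConvexOn {E : Type*} [AddCommGroup E] [Module ℝ E] (f : E → EReal) : Prop :=
  ∀ x y, ∀ t : ℝ, 0 ≤ t → t ≤ 1 →
    f (t • x + (1 - t) • y) ≤ (t : EReal) * f x + ((1 - t : ℝ) : EReal) * f y

/-- `f` belongs to `Γ₀(E)`: it is convex, lower semicontinuous and proper. -/
def IsGamma0 {E : Type*} [NormedAddCommGroup E] [InnerProductSpace ℝ E]
    (f : E → EReal) : Prop :=
  ERealConvexOn f ∧ LowerSemicontinuous f ∧ (∃ x, f x ≠ ⊤) ∧ ∀ x, f x ≠ ⊥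

/-- The infimal convolution `f □ g`. -/
def infConv {E : Type*} [AddCommGroup E] (f g : E → EReal) : E → EReal :=
  fun y => ⨅ u, f u + g (y - u)

/-- The Fenchel conjugate of `f`. -/
def conjFn {E : Type*} [NormedAddCommGroup E] [InnerProductSpace ℝ E]
    (f : E → EReal) : E → EReal :=
  fun u => ⨆ x, (((⟪x, u⟫ : ℝ) : EReal) - f x)

/-- The subdifferential of `f` at `x`. -/
def subdiff {E : Type*} [NormedAddCommGroup E] [InnerProductSpace ℝ E]
    (f : E → EReal) (x : E) : Set E :=
  {u | ∀ y, (((⟪y - x, u⟫ : ℝ) : EReal) + f x ≤ f y)}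

/-- The epigraph of `f`. -/
def epiSet {E : Type*} (f : E → EReal) : Set (E × ℝ) :=
  {p | f p.1 ≤ (p.2 : EReal)}

/-- `p = prox_{γ f} x`, characterized as the minimizer of
`u ↦ γ f(u) + ½‖u − x‖²`. -/
def IsProx {E : Type*} [NormedAddCommGroup E] [InnerProductSpace ℝ E]
    (γ : ℝ) (f : E → EReal) (x p : E) : Prop :=
  ∀ u, (γ : EReal) * f p + ((‖p - x‖ ^ 2 / 2 : ℝ) : EReal) ≤
    (γ : EReal) * f u + ((‖u - x‖ ^ 2 / 2 : ℝ) : EReal)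

universe u

variable {I K : Type*} {H : I → Type u} {G : K → Type u}

/-- The domain of an `EReal`-valued function. -/
def domSet {E : Type*} (f : E → EReal) : Set E := {x | f x ≠ ⊤}

/-- `0` belongs to the strong relative interior of the convex set `D`:
`⋃_{c > 0} c • D` is a closed linear subspace. -/
def ZeroMemSri {E : Type*} [NormedAddCommGroup E] [InnerProductSpace ℝ E]
    (D : Set E) : Prop :=
  ∃ S : Submodule ℝ E, IsClosed (S : Set E) ∧
    (⋃ (c : ℝ) (_ : 0 < c), c • D) = (S : Set E)

namespace StatAux

/-- split a real strictly below a sum of two non-bot ERals -/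
lemma ereal_split {X Y : EReal} {c : ℝ} (hX : X ≠ ⊥) (hY : Y ≠ ⊥)
    (h : (c : EReal) < X + Y) : ∃ c₁ c₂ : ℝ, c₁ + c₂ = c ∧ (c₁ : EReal) < X ∧ (c₂ : EReal) < Y := by
  by_cases hYt : Y = ⊤
  · rcases EReal.exists_between_coe_real (Ne.bot_lt hX) with ⟨c₁, _, hc₁⟩
    refine ⟨c₁, c - c₁, by ring, hc₁, ?_⟩
    rw [hYt]
    exact lt_of_le_of_ne le_top (EReal.coe_ne_top _)
  · lift Y to ℝ using ⟨hYt, hY⟩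
    have hcY : ((c - Y : ℝ) : EReal) < X := by
      rw [EReal.coe_sub]
      refine EReal.sub_lt_iff (by simp) (by simp) |>.mpr ?_
      have h2 : (c : EReal) < X + (Y : EReal) + 0 := by simpa using h
      simpa using h2
    rcases EReal.exists_between_coe_real hcY with ⟨c₁, hc₁l, hc₁r⟩
    refine ⟨c₁, c - c₁, by ring, hc₁r, ?_⟩
    rw [EReal.coe_lt_coe_iff] at hc₁l ⊢
    linarith
lemma ereal_real_add_lt {a b : ℝ} {X Y : EReal} (hX : (a:EReal) < X) (hY : (b:EReal) < Y) :
    ((a+b : ℝ) : EReal) < X + Y := by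
  rw [EReal.coe_add]; exact EReal.add_lt_add hX hY

/-- Young's inequality -/
lemma young {E : Type*} [NormedAddCommGroup E] [InnerProductSpace ℝ E]
    (f : E → EReal) (x u : E) : ((⟪x, u⟫ : ℝ) : EReal) - conjFn f u ≤ f x := by
  have h : ((⟪x, u⟫ : ℝ) : EReal) - f x ≤ conjFn f u := le_iSup (fun y => ((⟪y, u⟫ : ℝ) : EReal) - f y) x
  rcases eq_or_ne (f x) ⊤ with hx | hx
  · rw [hx]; exact le_top
  rcases eq_or_ne (conjFn f u) ⊤ with hc | hc
  · rw [hc]; simp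
  rcases eq_or_ne (f x) ⊥ with hb | hb
  · rw [hb] at h; simp at h
    rw [h] at hc; exact absurd rfl hc
  lift f x to ℝ using ⟨hx, hb⟩ with fx
  rcases eq_or_ne (conjFn f u) ⊥ with hcb | hcb
  · rw [hcb] at h
    rw [← EReal.coe_sub] at h
    exact absurd (le_bot_iff.mp h) (EReal.coe_ne_bot _)
  lift conjFn f u to ℝ using ⟨hc, hcb⟩ with cu
  rw [← EReal.coe_sub] at h ⊢
  rw [EReal.coe_le_coe_iff] at h ⊢
  linarith

lemma conj_ne_bot {E : Type*} [NormedAddCommGroup E] [InnerProductSpace ℝ E]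
    {f : E → EReal} (hp : ∃ x, f x ≠ ⊤) (hnb : ∀ x, f x ≠ ⊥) (u : E) : conjFn f u ≠ ⊥ := by
  rcases hp with ⟨x, hx⟩
  have h : ((⟪x, u⟫ : ℝ) : EReal) - f x ≤ conjFn f u := le_iSup (fun y => ((⟪y, u⟫ : ℝ) : EReal) - f y) x
  intro hb
  rw [hb, le_bot_iff] at h
  lift f x to ℝ using ⟨hx, hnb x⟩ with fx
  rw [← EReal.coe_sub] at h
  exact EReal.coe_ne_bot _ h

/-- from `X + B ≤ t` with `B` real, `X ≤ t - B`. -/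
lemma ereal_le_sub_of_add_le {X : EReal} {B t : ℝ} (h : X + (B:EReal) ≤ (t:EReal)) :
    X ≤ ((t - B : ℝ) : EReal) := by
  rcases eq_or_ne X ⊥ with hb | hb
  · simp [hb]
  rcases eq_or_ne X ⊤ with ht | ht
  · rw [ht] at h; simp [EReal.top_add_coe] at h
  lift X to ℝ using ⟨ht, hb⟩
  rw [← EReal.coe_add] at h
  rw [EReal.coe_le_coe_iff] at h ⊢
  linarith



variable {E : Type*} [NormedAddCommGroup E] [InnerProductSpace ℝ E]

lemma epi_closed {f : E → EReal} (hf : LowerSemicontinuous f) : IsClosed (epiSet f) := by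
  rw [← isOpen_compl_iff]
  rw [isOpen_iff_mem_nhds]
  rintro ⟨x, s⟩ hp
  have hlt : (s : EReal) < f x := not_le.mp hp
  obtain ⟨q, hq1, hq2⟩ := EReal.exists_between_coe_real hlt
  have h1 : ∀ᶠ y in nhds x, (q : EReal) < f y := hf x _ hq2
  have h2 : ∀ᶠ τ : ℝ in nhds s, τ < q := by
    have : Set.Iio q ∈ nhds s := Iio_mem_nhds (EReal.coe_lt_coe_iff.mp hq1)
    exact this
  have := (h1.prod_inl (nhds s)).and (h2.prod_inr (nhds x))
  rw [← nhds_prod_eq] at this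
  refine Filter.mem_of_superset this ?_
  rintro ⟨y, τ⟩ ⟨hy, hτ⟩
  simp only [Set.mem_compl_iff, epiSet, Set.mem_setOf_eq, not_le]
  exact lt_trans (EReal.coe_lt_coe_iff.mpr hτ) hy

lemma epi_convex {f : E → EReal} (hf : ERealConvexOn f) : Convex ℝ (epiSet f) := by
  rintro ⟨x, s⟩ hx ⟨y, τ⟩ hy a b ha hb hab
  simp only [epiSet, Set.mem_setOf_eq] at hx hy ⊢
  have hb' : b = 1 - a := by linarith
  subst hb'
  calc f (a • x + (1 - a) • y) ≤ (a : EReal) * f x + ((1 - a : ℝ) : EReal) * f y :=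
        hf x y a ha (by linarith)
    _ ≤ (a : EReal) * (s : EReal) + ((1 - a : ℝ) : EReal) * (τ : EReal) := by
        exact add_le_add (mul_le_mul_of_nonneg_left hx (EReal.coe_nonneg.mpr ha))
          (mul_le_mul_of_nonneg_left hy (EReal.coe_nonneg.mpr (by linarith : (0:ℝ) ≤ 1 - a)))
    _ = (((a * s + (1 - a) * τ : ℝ)) : EReal) := by
        rw [EReal.coe_add, EReal.coe_mul, EReal.coe_mul]

variable [CompleteSpace E]

lemma sep {f : E → EReal} (hf : IsGamma0 f) {x : E} {r : ℝ} (hr : (r : EReal) < f x) :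
    ∃ (v : E) (c α : ℝ), c ≤ 0 ∧
      (∀ w : E, ∀ τ : ℝ, f w ≤ (τ : EReal) → ⟪w, v⟫ + c * τ < α) ∧ α < ⟪x, v⟫ + c * r := by
  have hcl : IsClosed (epiSet f) := epi_closed hf.2.1
  have hcv : Convex ℝ (epiSet f) := epi_convex hf.1
  have hxr : (x, r) ∉ epiSet f := by
    simp only [epiSet, Set.mem_setOf_eq]
    exact not_le.mpr hr
  obtain ⟨ℓ, u, hsep, hpt⟩ := geometric_hahn_banach_closed_point hcv hcl hxr
  set φ : E →L[ℝ] ℝ := ℓ.comp (ContinuousLinearMap.inl ℝ E ℝ) with hφ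
  set v : E := (InnerProductSpace.toDual ℝ E).symm φ with hv
  set c : ℝ := ℓ (0, 1) with hc
  have hkey : ∀ w : E, ∀ τ : ℝ, ℓ (w, τ) = ⟪w, v⟫ + c * τ := by
    intro w τ
    have h1 : (w, τ) = (w, 0) + τ • ((0 : E), (1 : ℝ)) := by
      simp [Prod.ext_iff]
    rw [h1, map_add, map_smul]
    have h2 : ⟪w, v⟫ = φ w := by
      rw [hv, real_inner_comm]
      exact InnerProductSpace.toDual_symm_apply
    rw [h2]
    simp [hφ, hc, mul_comm]
  -- c ≤ 0
  have hc0 : c ≤ 0 := by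
    by_contra hpos
    push_neg at hpos
    obtain ⟨x₀, hx₀⟩ := hf.2.2.1
    have hx₀b := hf.2.2.2 x₀
    set τ₀ : ℝ := (f x₀).toReal with hτ₀
    have hfx₀ : f x₀ = (τ₀ : EReal) := (EReal.coe_toReal hx₀ hx₀b).symm
    set τ : ℝ := max τ₀ ((u - ⟪x₀, v⟫) / c) with hτ
    have hmem : (x₀, τ) ∈ epiSet f := by
      simp only [epiSet, Set.mem_setOf_eq, hfx₀]
      exact_mod_cast le_max_left _ _
    have := hsep _ hmem
    rw [hkey] at this
    have h3 : (u - ⟪x₀, v⟫) / c ≤ τ := le_max_right _ _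
    have h4 : u - ⟪x₀, v⟫ ≤ c * τ := by
      rw [div_le_iff₀ hpos] at h3
      linarith [h3]
    linarith
  refine ⟨v, c, u, hc0, ?_, ?_⟩
  · intro w τ hwτ
    have hmem : (w, τ) ∈ epiSet f := hwτ
    have := hsep _ hmem
    rwa [hkey] at this
  · have := hpt
    rwa [hkey] at this

/-- Bound on conjugate from a separating functional with `c < 0`. -/
lemma conj_bound {f : E → EReal} (hnb : ∀ w, f w ≠ ⊥) {v : E} {c α : ℝ} (hc : c < 0)
    (hlt : ∀ w : E, ∀ τ : ℝ, f w ≤ (τ : EReal) → ⟪w, v⟫ + c * τ < α) :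
    conjFn f ((-c)⁻¹ • v) ≤ (((-c)⁻¹ * α : ℝ) : EReal) := by
  refine iSup_le fun w => ?_
  rcases eq_or_ne (f w) ⊤ with hw | hw
  · rw [hw]
    simp
  · have hfw : f w = ((f w).toReal : EReal) := (EReal.coe_toReal hw (hnb w)).symm
    set fw : ℝ := (f w).toReal
    have h1 := hlt w fw (le_of_eq hfw)
    have ht : (0:ℝ) < (-c)⁻¹ := inv_pos.mpr (neg_pos.mpr hc)
    have h2 : ⟪w, (-c)⁻¹ • v⟫ = (-c)⁻¹ * ⟪w, v⟫ := real_inner_smul_right _ _ _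
    rw [hfw, h2, ← EReal.coe_sub, EReal.coe_le_coe_iff]
    have h3 := mul_lt_mul_of_pos_left h1 ht
    have hcc : (-c)⁻¹ * c = -1 := by
      rw [inv_neg, neg_mul, inv_mul_cancel₀ (ne_of_lt hc)]
    have h5 : (-c)⁻¹ * (⟪w, v⟫ + c * fw) = (-c)⁻¹ * ⟪w, v⟫ + ((-c)⁻¹ * c) * fw := by ring
    rw [hcc] at h5
    linarith [h3, h5.le, h5.ge]

/-- shifted conjugate bound, used in the `c = 0` case. -/
lemma conj_shift {f : E → EReal} (hnb : ∀ w, f w ≠ ⊥) {u₁ : E} {β₁ : ℝ}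
    (h1 : conjFn f u₁ ≤ (β₁ : EReal)) {v : E} {α : ℝ}
    (h2 : ∀ w : E, f w ≠ ⊤ → ⟪w, v⟫ ≤ α) {lam : ℝ} (hlam : 0 ≤ lam) :
    conjFn f (u₁ + lam • v) ≤ ((β₁ + lam * α : ℝ) : EReal) := by
  refine iSup_le fun w => ?_
  rcases eq_or_ne (f w) ⊤ with hw | hw
  · rw [hw]; simp
  · have hfw : f w = ((f w).toReal : EReal) := (EReal.coe_toReal hw (hnb w)).symm
    set fw : ℝ := (f w).toReal
    have hterm : ((⟪w, u₁⟫ - fw : ℝ) : EReal) ≤ (β₁ : EReal) := by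
      refine le_trans ?_ h1
      rw [EReal.coe_sub, ← hfw]
      exact le_iSup (fun y => ((⟪y, u₁⟫ : ℝ) : EReal) - f y) w
    rw [EReal.coe_le_coe_iff] at hterm
    have hwv := h2 w hw
    have : ⟪w, u₁ + lam • v⟫ = ⟪w, u₁⟫ + lam * ⟪w, v⟫ := by
      rw [inner_add_right, real_inner_smul_right]
    rw [hfw, this, ← EReal.coe_sub, EReal.coe_le_coe_iff]
    nlinarith [mul_le_mul_of_nonneg_left hwv hlam]

lemma exists_conj_bound {f : E → EReal} (hf : IsGamma0 f) :
    ∃ (u : E) (β : ℝ), conjFn f u ≤ (β : EReal) := by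
  obtain ⟨x₀, hx₀⟩ := hf.2.2.1
  have hx₀b := hf.2.2.2 x₀
  have hfx₀ : f x₀ = ((f x₀).toReal : EReal) := (EReal.coe_toReal hx₀ hx₀b).symm
  have hr : (((f x₀).toReal - 1 : ℝ) : EReal) < f x₀ := by
    rw [hfx₀]
    exact_mod_cast sub_one_lt _
  obtain ⟨v, c, α, hc0, hlt, hgt⟩ := sep hf hr
  rcases lt_or_eq_of_le hc0 with hc | hc
  · exact ⟨_, _, conj_bound hf.2.2.2 hc hlt⟩
  · exfalso
    have h1 := hlt x₀ ((f x₀).toReal) (le_of_eq hfx₀)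
    rw [hc] at h1 hgt
    simp only [zero_mul, add_zero] at h1 hgt
    linarith

theorem biconj {f : E → EReal} (hf : IsGamma0 f) (x : E) : conjFn (conjFn f) x = f x := by
  refine le_antisymm ?_ ?_
  · refine iSup_le fun u => ?_
    have := young f x u
    rwa [real_inner_comm] at this
  · by_contra hcon
    push_neg at hcon
    obtain ⟨r, hr1, hr2⟩ := EReal.exists_between_coe_real hcon
    have hclaim : (r : EReal) ≤ conjFn (conjFn f) x := by
      obtain ⟨v, c, α, hc0, hlt, hgt⟩ := sep hf hr2
      rcases lt_or_eq_of_le hc0 with hc | hc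
      · set t : ℝ := (-c)⁻¹ with hT
        have ht : (0:ℝ) < t := by rw [hT]; exact inv_pos.mpr (neg_pos.mpr hc)
        have hcb := conj_bound hf.2.2.2 hc hlt
        have hfinal : (r : EReal) ≤ ((⟪x, t • v⟫ - t * α : ℝ) : EReal) := by
          rw [EReal.coe_le_coe_iff, real_inner_smul_right]
          have h3 := mul_lt_mul_of_pos_left hgt ht
          have hcc : t * c = -1 := by
            rw [hT, inv_neg, neg_mul, inv_mul_cancel₀ (ne_of_lt hc)]
          have h5 : t * (⟪x, v⟫ + c * r) = t * ⟪x, v⟫ + (t * c) * r := by ring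
          rw [hcc] at h5
          linarith [h3, h5.le, h5.ge]
        refine le_trans hfinal ?_
        calc ((⟪x, t • v⟫ - t * α : ℝ) : EReal)
            = ((⟪x, t • v⟫ : ℝ) : EReal) - ((t * α : ℝ) : EReal) := EReal.coe_sub _ _
          _ ≤ ((⟪x, t • v⟫ : ℝ) : EReal) - conjFn f (t • v) := EReal.sub_le_sub le_rfl hcb
          _ = ((⟪t • v, x⟫ : ℝ) : EReal) - conjFn f (t • v) := by rw [real_inner_comm]
          _ ≤ conjFn (conjFn f) x := le_iSup (fun u => ((⟪u, x⟫ : ℝ) : EReal) - conjFn f u) _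
      · -- c = 0
        obtain ⟨u₁, β₁, hu₁⟩ := exists_conj_bound hf
        rw [hc] at hlt hgt
        simp only [zero_mul, add_zero] at hlt hgt
        have h2 : ∀ w : E, f w ≠ ⊤ → ⟪w, v⟫ ≤ α := by
          intro w hw
          have hfw : f w = ((f w).toReal : EReal) := (EReal.coe_toReal hw (hf.2.2.2 w)).symm
          exact le_of_lt (hlt w _ (le_of_eq hfw))
        set lam : ℝ := max 0 ((r - ⟪x, u₁⟫ + β₁) / (⟪x, v⟫ - α)) + 1 with hlamdef
        have hlam0 : 0 ≤ lam := by
          have := le_max_left 0 ((r - ⟪x, u₁⟫ + β₁) / (⟪x, v⟫ - α))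
          rw [hlamdef]; linarith
        have hcs := conj_shift hf.2.2.2 hu₁ h2 hlam0
        have hden : 0 < ⟪x, v⟫ - α := by linarith
        have hlamge : (r - ⟪x, u₁⟫ + β₁) / (⟪x, v⟫ - α) ≤ lam - 1 := by
          rw [hlamdef]; simp [le_max_right]
        have hfinal : (r : EReal) ≤ ((⟪x, u₁ + lam • v⟫ - (β₁ + lam * α) : ℝ) : EReal) := by
          rw [EReal.coe_le_coe_iff, inner_add_right, real_inner_smul_right]
          rw [div_le_iff₀ hden] at hlamge
          nlinarith [hlamge, hden]
        refine le_trans hfinal ?_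
        calc ((⟪x, u₁ + lam • v⟫ - (β₁ + lam * α) : ℝ) : EReal)
            = ((⟪x, u₁ + lam • v⟫ : ℝ) : EReal) - ((β₁ + lam * α : ℝ) : EReal) := EReal.coe_sub _ _
          _ ≤ ((⟪x, u₁ + lam • v⟫ : ℝ) : EReal) - conjFn f (u₁ + lam • v) :=
              EReal.sub_le_sub le_rfl hcs
          _ = ((⟪u₁ + lam • v, x⟫ : ℝ) : EReal) - conjFn f (u₁ + lam • v) := by
              rw [real_inner_comm]
          _ ≤ conjFn (conjFn f) x := le_iSup (fun u => ((⟪u, x⟫ : ℝ) : EReal) - conjFn f u) _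
    exact absurd (lt_of_le_of_lt hclaim hr1) (lt_irrefl _)


variable {E : Type*} [NormedAddCommGroup E] [InnerProductSpace ℝ E] [CompleteSpace E]

lemma conj_real {f : E → EReal} (hf : IsGamma0 f) {u : E} (hu : conjFn f u ≠ ⊤) :
    conjFn f u = ((conjFn f u).toReal : EReal) :=
  (EReal.coe_toReal hu (conj_ne_bot hf.2.2.1 hf.2.2.2 u)).symm

lemma invariance_le {f : E → EReal} (hf : IsGamma0 f) {S : Submodule ℝ E} {v : E}
    (hdom : ∀ u, conjFn f u ≠ ⊤ → u - v ∈ S) :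
    ∀ (x y : E), y ∈ Sᗮ → f (x + y) ≤ f x + ((⟪y, v⟫ : ℝ) : EReal) := by
  intro x y hy
  conv_lhs => rw [← biconj hf]
  refine iSup_le fun u => ?_
  rcases eq_or_ne (conjFn f u) ⊤ with hu | hu
  · rw [hu]
    simp
  · have hcu := conj_real hf hu
    set cu : ℝ := (conjFn f u).toReal
    have huy : (⟪u, y⟫ : ℝ) = ⟪v, y⟫ := by
      have h0 : (⟪u - v, y⟫ : ℝ) = 0 := (Submodule.mem_orthogonal S y).mp hy _ (hdom u hu)
      rw [inner_sub_left] at h0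
      linarith
    have hterm : ((⟪u, x + y⟫ : ℝ) : EReal) - conjFn f u
        = (((⟪u, x⟫ - cu : ℝ)) : EReal) + ((⟪y, v⟫ : ℝ) : EReal) := by
      rw [hcu, inner_add_right, huy, ← EReal.coe_sub, ← EReal.coe_add]
      norm_cast
      rw [real_inner_comm v y]
      ring
    rw [hterm]
    refine add_le_add_left ?_ _
    have : ((⟪u, x⟫ - cu : ℝ) : EReal) = ((⟪u, x⟫ : ℝ) : EReal) - conjFn f u := by
      rw [hcu, ← EReal.coe_sub]
    rw [this]
    calc ((⟪u, x⟫ : ℝ) : EReal) - conjFn f u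
        ≤ conjFn (conjFn f) x := le_iSup (fun w => ((⟪w, x⟫ : ℝ) : EReal) - conjFn f w) u
      _ = f x := biconj hf x

lemma invariance {f : E → EReal} (hf : IsGamma0 f) {S : Submodule ℝ E} {v : E}
    (hdom : ∀ u, conjFn f u ≠ ⊤ → u - v ∈ S) {y : E} (hy : y ∈ Sᗮ) (x : E) :
    f (x + y) = f x + ((⟪y, v⟫ : ℝ) : EReal) := by
  refine le_antisymm (invariance_le hf hdom x y hy) ?_
  have h2 := invariance_le hf hdom (x + y) (-y) (neg_mem hy)
  rw [add_neg_cancel_right] at h2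
  have h3 := add_le_add_left h2 ((⟪y, v⟫ : ℝ) : EReal)
  have h4 : f (x + y) + ((⟪-y, v⟫ : ℝ) : EReal) + ((⟪y, v⟫ : ℝ) : EReal) = f (x + y) := by
    rw [add_assoc, ← EReal.coe_add, inner_neg_left]
    norm_num
  rwa [h4] at h3

lemma weak_liminf {f : E → EReal} (hf : IsGamma0 f) (b : ℕ → E) (binf : E)
    (hw : ∀ u : E, Filter.Tendsto (fun n => (⟪b n, u⟫ : ℝ)) Filter.atTop (nhds ⟪binf, u⟫)) :
    f binf ≤ Filter.liminf (fun n => f (b n)) Filter.atTop := by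
  conv_lhs => rw [← biconj hf]
  refine iSup_le fun u => ?_
  rcases eq_or_ne (conjFn f u) ⊤ with hu | hu
  · rw [hu]; simp
  · have hcu := conj_real hf hu
    set cu : ℝ := (conjFn f u).toReal
    have hy : ∀ n, (((⟪b n, u⟫ - cu : ℝ)) : EReal) ≤ f (b n) := by
      intro n
      have := young f (b n) u
      rwa [hcu, ← EReal.coe_sub] at this
    have htd : Filter.Tendsto (fun n => (((⟪b n, u⟫ - cu : ℝ)) : EReal)) Filter.atTop
        (nhds (((⟪binf, u⟫ - cu : ℝ) : EReal))) :=
      (continuous_coe_real_ereal.tendsto _).comp ((hw u).sub_const cu)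
    have heq : Filter.liminf (fun n => (((⟪b n, u⟫ - cu : ℝ)) : EReal)) Filter.atTop
        = ((⟪binf, u⟫ - cu : ℝ) : EReal) := htd.liminf_eq
    have hle : Filter.liminf (fun n => (((⟪b n, u⟫ - cu : ℝ)) : EReal)) Filter.atTop
        ≤ Filter.liminf (fun n => f (b n)) Filter.atTop :=
      Filter.liminf_le_liminf (Filter.Eventually.of_forall hy)
    rw [heq] at hle
    refine le_trans (le_of_eq ?_) hle
    rw [hcu, real_inner_comm, ← EReal.coe_sub]


variable {E : Type*} [NormedAddCommGroup E] [InnerProductSpace ℝ E] [CompleteSpace E]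

lemma proj_norm_bound (S : Submodule ℝ E) (hS : IsClosed (S : Set E)) (a : ℕ → E)
    (hbd : ∀ s ∈ S, ∃ C : ℝ, ∀ n, |(⟪a n, s⟫ : ℝ)| ≤ C) :
    haveI : CompleteSpace S := hS.completeSpace_coe
    ∃ M : ℝ, 0 ≤ M ∧ ∀ n, ‖(S.orthogonalProjection (a n) : E)‖ ≤ M := by
  haveI : CompleteSpace S := hS.completeSpace_coe
  set g : ℕ → (S →L[ℝ] ℝ) := fun n => (innerSL ℝ (a n)).comp S.subtypeL with hg
  have hpt : ∀ x : S, ∃ C, ∀ n, ‖g n x‖ ≤ C := by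
    rintro ⟨s, hs⟩
    obtain ⟨C, hC⟩ := hbd s hs
    exact ⟨C, fun n => by simpa [hg] using hC n⟩
  obtain ⟨C', hC'⟩ := banach_steinhaus hpt
  refine ⟨max C' 0, le_max_right _ _, fun n => ?_⟩
  set p : E := (S.orthogonalProjection (a n) : E) with hp
  have hpmem : p ∈ S := (S.orthogonalProjection (a n)).2
  have h1 : (⟪a n - p, p⟫ : ℝ) = 0 := Submodule.starProjection_inner_eq_zero (a n) p hpmem
  have h2 : (⟪a n, p⟫ : ℝ) = ‖p‖ ^ 2 := by
    rw [inner_sub_left] at h1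
    have := real_inner_self_eq_norm_sq p
    linarith
  have h3 : g n ⟨p, hpmem⟩ = (⟪a n, p⟫ : ℝ) := by simp [hg]
  have h4 : ‖p‖ ^ 2 ≤ C' * ‖p‖ := by
    calc ‖p‖ ^ 2 = g n ⟨p, hpmem⟩ := by rw [h3, h2]
      _ ≤ ‖g n ⟨p, hpmem⟩‖ := le_abs_self _
      _ ≤ ‖g n‖ * ‖(⟨p, hpmem⟩ : S)‖ := (g n).le_opNorm _
      _ ≤ C' * ‖p‖ := by
          have : ‖(⟨p, hpmem⟩ : S)‖ = ‖p‖ := rfl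
          rw [this]
          exact mul_le_mul_of_nonneg_right (hC' n) (norm_nonneg _)
  rcases eq_or_lt_of_le (norm_nonneg p) with h0 | h0
  · rw [← h0]; exact le_max_right _ _
  · have : ‖p‖ ≤ C' := by nlinarith
    exact le_trans this (le_max_left _ _)

lemma weak_compact (a : ℕ → E) (M : ℝ) (hM : ∀ n, ‖a n‖ ≤ M) :
    ∃ φ : ℕ → ℕ, StrictMono φ ∧ ∃ ainf : E,
      ∀ u : E, Filter.Tendsto (fun j => (⟪a (φ j), u⟫ : ℝ)) Filter.atTop (nhds ⟪ainf, u⟫) := by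
  have hM0 : 0 ≤ M := le_trans (norm_nonneg _) (hM 0)
  have hMM : ∀ n k, |(⟪a n, a k⟫ : ℝ)| ≤ M * M := fun n k =>
    le_trans (abs_real_inner_le_norm _ _) (mul_le_mul (hM n) (hM k) (norm_nonneg _) hM0)
  set T : ℕ → (ℕ → ℝ) := fun n k => ⟪a n, a k⟫ with hT
  set Q : Set (ℕ → ℝ) := Set.univ.pi (fun _ => Set.Icc (-(M*M)) (M*M)) with hQdef
  have hQ : IsCompact Q := isCompact_univ_pi (fun _ => isCompact_Icc)
  have hTQ : ∀ n, T n ∈ Q := by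
    intro n
    rw [hQdef, Set.mem_univ_pi]
    intro k
    exact abs_le.mp (hMM n k)
  obtain ⟨L, _, φ, hφ, hTtend⟩ := hQ.isSeqCompact hTQ
  have hpt : ∀ k, Filter.Tendsto (fun j => (⟪a (φ j), a k⟫ : ℝ)) Filter.atTop (nhds (L k)) :=
    fun k => (tendsto_pi_nhds.mp hTtend) k
  -- every element of the closed span gives a convergent sequence
  set W : Submodule ℝ E := (Submodule.span ℝ (Set.range a)).topologicalClosure with hW
  have hWclosed : IsClosed (W : Set E) := Submodule.isClosed_topologicalClosure _
  haveI : CompleteSpace W := hWclosed.completeSpace_coe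
  have hspan : ∀ y ∈ Submodule.span ℝ (Set.range a),
      ∃ l : ℝ, Filter.Tendsto (fun j => (⟪a (φ j), y⟫ : ℝ)) Filter.atTop (nhds l) := by
    intro y hy
    induction hy using Submodule.span_induction with
    | mem z hz =>
        obtain ⟨k, rfl⟩ := hz
        exact ⟨L k, hpt k⟩
    | zero => exact ⟨0, by simpa using tendsto_const_nhds⟩
    | add z w _ _ hz hw =>
        obtain ⟨lz, hlz⟩ := hz
        obtain ⟨lw, hlw⟩ := hw
        exact ⟨lz + lw, by simpa [inner_add_right] using hlz.add hlw⟩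
    | smul c z _ hz =>
        obtain ⟨lz, hlz⟩ := hz
        exact ⟨c * lz, by simpa [inner_smul_right] using hlz.const_mul c⟩
  have hclos : ∀ y ∈ W, ∃ l : ℝ,
      Filter.Tendsto (fun j => (⟪a (φ j), y⟫ : ℝ)) Filter.atTop (nhds l) := by
    intro y hy
    have hcauchy : CauchySeq (fun j => (⟪a (φ j), y⟫ : ℝ)) := by
      rw [Metric.cauchySeq_iff]
      intro ε hε
      have hy' : y ∈ closure ((Submodule.span ℝ (Set.range a) : Submodule ℝ E) : Set E) := hy
      rw [Metric.mem_closure_iff] at hy'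
      obtain ⟨y', hy'mem, hy'close⟩ := hy' (ε / (4 * (M + 1))) (by positivity)
      obtain ⟨l', hl'⟩ := hspan y' hy'mem
      have hc' : CauchySeq (fun j => (⟪a (φ j), y'⟫ : ℝ)) := hl'.cauchySeq
      rw [Metric.cauchySeq_iff] at hc'
      obtain ⟨N, hN⟩ := hc' (ε / 2) (by positivity)
      refine ⟨N, fun m hm n hn => ?_⟩
      have key : ∀ j, |(⟪a (φ j), y⟫ : ℝ) - ⟪a (φ j), y'⟫| ≤ M * (ε / (4 * (M + 1))) := by
        intro j
        have : (⟪a (φ j), y⟫ : ℝ) - ⟪a (φ j), y'⟫ = ⟪a (φ j), y - y'⟫ := by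
          rw [inner_sub_right]
        rw [this]
        calc |(⟪a (φ j), y - y'⟫ : ℝ)| ≤ ‖a (φ j)‖ * ‖y - y'‖ := abs_real_inner_le_norm _ _
          _ ≤ M * (ε / (4 * (M + 1))) := by
              apply mul_le_mul (hM _) _ (norm_nonneg _) hM0
              rw [← dist_eq_norm]
              exact le_of_lt hy'close
      have hMfrac : M * (ε / (4 * (M + 1))) ≤ ε / 4 := by
        have heq : M * (ε / (4 * (M + 1))) = (M * ε) / (4 * (M + 1)) := by ring
        rw [heq, div_le_div_iff₀ (by positivity) (by norm_num : (0:ℝ) < 4)]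
        nlinarith [le_of_lt hε, hM0]
      have hd := hN m hm n hn
      rw [Real.dist_eq] at hd ⊢
      have k1 := key m
      have k2 := key n
      have : (⟪a (φ m), y⟫ : ℝ) - ⟪a (φ n), y⟫ =
          ((⟪a (φ m), y⟫ : ℝ) - ⟪a (φ m), y'⟫) + ((⟪a (φ m), y'⟫ : ℝ) - ⟪a (φ n), y'⟫)
          + ((⟪a (φ n), y'⟫ : ℝ) - ⟪a (φ n), y⟫) := by ring
      rw [this]
      calc |_ + _ + _| ≤ |(⟪a (φ m), y⟫ : ℝ) - ⟪a (φ m), y'⟫| + |(⟪a (φ m), y'⟫ : ℝ) - ⟪a (φ n), y'⟫|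
            + |(⟪a (φ n), y'⟫ : ℝ) - ⟪a (φ n), y⟫| := by
              exact le_trans (abs_add_le _ _) (by gcongr; exact abs_add_le _ _)
        _ < ε := by
            rw [abs_sub_comm (⟪a (φ n), y'⟫ : ℝ)] at *
            have := key n
            linarith [k1, hd, this, hMfrac]
    exact cauchySeq_tendsto_of_complete hcauchy
  -- extend to all of E via the orthogonal projection onto W
  have haW : ∀ n, a n ∈ W :=
    fun n => Submodule.le_topologicalClosure _ (Submodule.subset_span (Set.mem_range_self n))
  have hconv : ∀ y : E, ∃ l : ℝ,
      Filter.Tendsto (fun j => (⟪a (φ j), y⟫ : ℝ)) Filter.atTop (nhds l) := by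
    intro y
    obtain ⟨l, hl⟩ := hclos ((W.orthogonalProjection y : E)) (W.orthogonalProjection y).2
    refine ⟨l, ?_⟩
    have : ∀ j, (⟪a (φ j), y⟫ : ℝ) = ⟪a (φ j), (W.orthogonalProjection y : E)⟫ := by
      intro j
      have horth : y - (W.orthogonalProjection y : E) ∈ Wᗮ :=
        Submodule.sub_starProjection_mem_orthogonal y
      have h0 : (⟪a (φ j), y - (W.orthogonalProjection y : E)⟫ : ℝ) = 0 :=
        (Submodule.mem_orthogonal W _).mp horth _ (haW _)
      rw [inner_sub_right] at h0
      linarith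
    simpa [this] using hl
  choose l hl using hconv
  have hlin_add : ∀ y z : E, l (y + z) = l y + l z := by
    intro y z
    refine tendsto_nhds_unique (hl (y + z)) ?_
    have := (hl y).add (hl z)
    simpa [inner_add_right] using this
  have hlin_smul : ∀ (c : ℝ) (y : E), l (c • y) = c * l y := by
    intro c y
    refine tendsto_nhds_unique (hl (c • y)) ?_
    simpa [inner_smul_right] using (hl y).const_mul c
  have hbound : ∀ y : E, ‖l y‖ ≤ M * ‖y‖ := by
    intro y
    have h1 : Filter.Tendsto (fun j => |(⟪a (φ j), y⟫ : ℝ)|) Filter.atTop (nhds |l y|) :=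
      (hl y).abs
    refine le_of_tendsto h1 (Filter.Eventually.of_forall fun j => ?_)
    exact le_trans (abs_real_inner_le_norm _ _) (mul_le_mul_of_nonneg_right (hM _) (norm_nonneg _))
  set Lmap : E →ₗ[ℝ] ℝ :=
    { toFun := l
      map_add' := hlin_add
      map_smul' := fun c y => by simpa using hlin_smul c y } with hLmap
  set Lc : E →L[ℝ] ℝ := Lmap.mkContinuous M (fun y => hbound y) with hLc
  set ainf : E := (InnerProductSpace.toDual ℝ E).symm Lc with hainf
  refine ⟨φ, hφ, ainf, fun u => ?_⟩
  have : (⟪ainf, u⟫ : ℝ) = Lc u := InnerProductSpace.toDual_symm_apply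
  rw [this]
  have : Lc u = l u := rfl
  rw [this]
  exact hl u



lemma add_ne_bot' {a b : EReal} (ha : a ≠ ⊥) (hb : b ≠ ⊥) : a + b ≠ ⊥ := by
  induction a using EReal.rec with
  | bot => exact absurd rfl ha
  | top =>
      induction b using EReal.rec with
      | bot => exact absurd rfl hb
      | top => simp
      | coe b => simp
  | coe a =>
      induction b using EReal.rec with
      | bot => exact absurd rfl hb
      | top => simp
      | coe b => rw [← EReal.coe_add]; exact EReal.coe_ne_bot _


end StatAux

open StatAux

/-- **Proposition 95[a].**  In the setting of Problem 2, if the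
Kuhn–Tucker condition (KT) holds and `0 ∈ sri (dom gₖ* + dom ψₖ* − dom hₖ*)` for every
`k ∈ K`, then the set `epi (gₖ+ψₖ) + epi hₖ` is closed in `Gₖ × ℝ` for every `k`. -/
theorem epiSum_isClosed_of_sri
    [Fintype I] [Fintype K] [Nonempty I] [Nonempty K]
    [∀ i, NormedAddCommGroup (H i)] [∀ i, InnerProductSpace ℝ (H i)]
    [∀ i, CompleteSpace (H i)]
    [∀ k, NormedAddCommGroup (G k)] [∀ k, InnerProductSpace ℝ (G k)]
    [∀ k, CompleteSpace (G k)]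
    -- Problem 2 data
    (f : ∀ i, H i → EReal) (hf : ∀ i, IsGamma0 (f i))
    (αp : I → ℝ) (hαp : ∀ i, 0 < αp i)
    (φ : ∀ i, H i → ℝ) (φ' : ∀ i, H i → H i)
    (hφcv : ∀ i, ConvexOn ℝ Set.univ (φ i))
    (hφgrad : ∀ i x, HasGradientAt (φ i) (φ' i x) x)
    (hφlip : ∀ i, IsLipschitzMap (φ' i) (1 / αp i))
    (g h : ∀ k, G k → EReal) (hg : ∀ k, IsGamma0 (g k)) (hh : ∀ k, IsGamma0 (h k))
    (βp : K → ℝ) (hβp : ∀ k, 0 < βp k)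
    (ψ : ∀ k, G k → ℝ) (ψ' : ∀ k, G k → G k)
    (hψcv : ∀ k, ConvexOn ℝ Set.univ (ψ k))
    (hψgrad : ∀ k x, HasGradientAt (ψ k) (ψ' k x) x)
    (hψlip : ∀ k, IsLipschitzMap (ψ' k) (1 / βp k))
    (L : ∀ k i, H i →L[ℝ] G k)
    (χ : ℝ) (hχ : 0 ≤ χ)
    (Θ : PiLp 2 H → ℝ) (Θ' : PiLp 2 H → PiLp 2 H)
    (hΘcv : ConvexOn ℝ Set.univ Θ)
    (hΘgrad : ∀ w, HasGradientAt Θ (Θ' w) w)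
    (hΘlip : IsLipschitzMap Θ' χ)
    -- the Kuhn–Tucker condition (KT)
    (xt : PiLp 2 H) (vt : PiLp 2 G)
    (hKT1 : ∀ i, -(∑ j, ContinuousLinearMap.adjoint (L j i) (vt j)) - φ' i (xt i) -
      Θ' xt i ∈ subdiff (f i) (xt i))
    (hKT2 : ∀ k, (∑ j, L k j (xt j)) ∈
      subdiff (infConv (conjFn (g k)) (conjFn (fun u => ((ψ k u : ℝ) : EReal)))) (vt k)
      + subdiff (conjFn (h k)) (vt k))
    -- the strong relative interior condition
    (hsri : ∀ k, ZeroMemSri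
      (domSet (conjFn (g k)) + domSet (conjFn (fun u => ((ψ k u : ℝ) : EReal)))
        - domSet (conjFn (h k)))) :
    ∀ k, IsClosed (epiSet (fun u => g k u + ((ψ k u : ℝ) : EReal)) + epiSet (h k)) := by
  intro k
  -- notation
  set Ψ : G k → EReal := fun u => ((ψ k u : ℝ) : EReal) with hΨdef
  -- Ψ is Γ₀
  have hψcont : Continuous (ψ k) := by
    have : Differentiable ℝ (ψ k) := fun x => (hψgrad k x).hasFDerivAt.differentiableAt
    exact this.continuous
  have hΨΓ : IsGamma0 Ψ := by
    refine ⟨?_, ?_, ⟨0, by simp [hΨdef]⟩, fun x => by simp [hΨdef]⟩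
    · intro x y t ht0 ht1
      simp only [hΨdef, ← EReal.coe_mul, ← EReal.coe_add, EReal.coe_le_coe_iff]
      have := (hψcv k).2 (Set.mem_univ x) (Set.mem_univ y) ht0 (by linarith : (0:ℝ) ≤ 1 - t)
        (by ring)
      simpa [smul_eq_mul] using this
    · exact (continuous_coe_real_ereal.comp hψcont).lowerSemicontinuous
  have hgΓ := hg k
  have hhΓ := hh k
  -- the sri data
  obtain ⟨S, hSclosed, hSeq⟩ := hsri k
  haveI : CompleteSpace S := hSclosed.completeSpace_coe
  set A : Set (G k) := domSet (conjFn (g k)) with hA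
  set B : Set (G k) := domSet (conjFn Ψ) with hB
  set C : Set (G k) := domSet (conjFn (h k)) with hC
  have hDsubS : A + B - C ⊆ (S : Set (G k)) := by
    intro d hd
    rw [← hSeq]
    exact Set.mem_iUnion.mpr ⟨1, Set.mem_iUnion.mpr ⟨one_pos, by simpa using hd⟩⟩
  have h0D : (0 : G k) ∈ A + B - C := by
    have h0S : (0 : G k) ∈ (S : Set (G k)) := S.zero_mem
    rw [← hSeq] at h0S
    obtain ⟨_, ⟨c, rfl⟩, hc⟩ := h0S
    obtain ⟨_, ⟨hcpos, rfl⟩, hmem⟩ := hc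
    obtain ⟨d, hd, hcd⟩ := Set.mem_smul_set.mp hmem
    have hd0 : d = 0 := by
      have h2 := congrArg (fun w => c⁻¹ • w) hcd
      simpa [smul_smul, inv_mul_cancel₀ (ne_of_gt hcpos)] using h2
    rwa [hd0] at hd
  obtain ⟨z₀', hz₀'AB, z₀, hz₀C, hzz⟩ := Set.mem_sub.mp h0D
  obtain ⟨u₀, hu₀A, w₀, hw₀B, huw⟩ := Set.mem_add.mp hz₀'AB
  have hz₀eq : z₀ = u₀ + w₀ := by
    have : z₀' = z₀ := by
      have := hzz
      rwa [sub_eq_zero] at this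
    rw [← this, ← huw]
  -- domain inclusions
  have hgdom : ∀ v, conjFn (g k) v ≠ ⊤ → v - u₀ ∈ S := by
    intro v hv
    have : (v + w₀) - z₀ ∈ A + B - C := Set.sub_mem_sub (Set.add_mem_add hv hw₀B) hz₀C
    have hS := hDsubS this
    have heq : (v + w₀) - z₀ = v - u₀ := by rw [hz₀eq]; abel
    rwa [heq] at hS
  have hΨdom : ∀ v, conjFn Ψ v ≠ ⊤ → v - w₀ ∈ S := by
    intro v hv
    have : (u₀ + v) - z₀ ∈ A + B - C := Set.sub_mem_sub (Set.add_mem_add hu₀A hv) hz₀C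
    have hS := hDsubS this
    have heq : (u₀ + v) - z₀ = v - w₀ := by rw [hz₀eq]; abel
    rwa [heq] at hS
  have hhdom : ∀ v, conjFn (h k) v ≠ ⊤ → v - z₀ ∈ S := by
    intro v hv
    have : (u₀ + w₀) - v ∈ A + B - C := Set.sub_mem_sub (Set.add_mem_add hu₀A hw₀B) hv
    have hS := hDsubS this
    have : -((u₀ + w₀) - v) ∈ S := neg_mem hS
    have heq : -((u₀ + w₀) - v) = v - z₀ := by rw [hz₀eq]; abel
    rwa [heq] at this
  -- sequential closedness
  rw [← isSeqClosed_iff_isClosed]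
  rintro p ⟨x, t⟩ hp hq
  have hx : Filter.Tendsto (fun n => (p n).1) Filter.atTop (nhds x) :=
    (continuous_fst.tendsto _).comp hq
  have ht : Filter.Tendsto (fun n => (p n).2) Filter.atTop (nhds t) :=
    (continuous_snd.tendsto _).comp hq
  have hmem : ∀ n, ∃ y ∈ epiSet (fun u => g k u + Ψ u), ∃ z ∈ epiSet (h k), y + z = p n :=
    fun n => Set.mem_add.mp (hp n)
  choose y hy z hz hyz using hmem
  set an : ℕ → G k := fun n => (y n).1 with han
  set bn : ℕ → G k := fun n => (z n).1 with hbn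
  have hab : ∀ n, an n + bn n = (p n).1 := fun n => congrArg Prod.fst (hyz n)
  have hst : ∀ n, (y n).2 + (z n).2 = (p n).2 := fun n => congrArg Prod.snd (hyz n)
  -- real values
  have hreal : ∀ n, ∃ gr hr : ℝ, g k (an n) = (gr : EReal) ∧ h k (bn n) = (hr : EReal) ∧
      gr + ψ k (an n) + hr ≤ (p n).2 := by
    intro n
    have hy' : g k (an n) + Ψ (an n) ≤ ((y n).2 : EReal) := hy n
    have hz' : h k (bn n) ≤ ((z n).2 : EReal) := hz n
    have hgtop : g k (an n) ≠ ⊤ := by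
      intro hgt
      rw [hgt, hΨdef] at hy'
      rw [EReal.top_add_coe] at hy'
      exact (not_le.mpr (EReal.coe_lt_top _)) hy'
    have hgbot := hgΓ.2.2.2 (an n)
    have hhtop : h k (bn n) ≠ ⊤ := (lt_of_le_of_lt hz' (EReal.coe_lt_top _)).ne
    have hhbot := hhΓ.2.2.2 (bn n)
    refine ⟨(g k (an n)).toReal, (h k (bn n)).toReal,
      (EReal.coe_toReal hgtop hgbot).symm, (EReal.coe_toReal hhtop hhbot).symm, ?_⟩
    have h1 : (g k (an n)).toReal + ψ k (an n) ≤ (y n).2 := by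
      have hcoe : (((g k (an n)).toReal + ψ k (an n) : ℝ) : EReal) ≤ ((y n).2 : EReal) := by
        rw [EReal.coe_add, EReal.coe_toReal hgtop hgbot]
        exact hy'
      exact EReal.coe_le_coe_iff.mp hcoe
    have h2 : (h k (bn n)).toReal ≤ (z n).2 := by
      have : (((h k (bn n)).toReal : ℝ) : EReal) ≤ ((z n).2 : EReal) := by
        rw [EReal.coe_toReal hhtop hhbot]; exact hz'
      exact EReal.coe_le_coe_iff.mp this
    rw [← hst n]
    linarith
  choose gra hrb hgra hhrb hsumr using hreal
  -- pointwise bounds along S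
  have hone : ∀ s ∈ S, ∃ Cb : ℝ, ∀ n, (⟪an n, s⟫ : ℝ) ≤ Cb := by
    intro s hs
    have hs2 : s ∈ (S : Set (G k)) := hs
    rw [← hSeq] at hs2
    obtain ⟨_, ⟨c, rfl⟩, hc⟩ := hs2
    obtain ⟨_, ⟨hcpos, rfl⟩, hmem'⟩ := hc
    obtain ⟨d, hd, hcd⟩ := Set.mem_smul_set.mp hmem'
    obtain ⟨pq, hpq, zz, hzzC, hpqz⟩ := Set.mem_sub.mp hd
    obtain ⟨uu, huuA, ww, hwwB, huww⟩ := Set.mem_add.mp hpq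
    -- conjugate values are real
    have hgu : conjFn (g k) uu ≠ ⊤ := huuA
    have hgu' := conj_ne_bot hgΓ.2.2.1 hgΓ.2.2.2 uu
    have hΨw : conjFn Ψ ww ≠ ⊤ := hwwB
    have hΨw' := conj_ne_bot hΨΓ.2.2.1 hΨΓ.2.2.2 ww
    have hhz : conjFn (h k) zz ≠ ⊤ := hzzC
    have hhz' := conj_ne_bot hhΓ.2.2.1 hhΓ.2.2.2 zz
    set cg : ℝ := (conjFn (g k) uu).toReal with hcg
    set cΨ : ℝ := (conjFn Ψ ww).toReal with hcΨ
    set ch : ℝ := (conjFn (h k) zz).toReal with hch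
    -- Young inequalities in real form
    have hY1 : ∀ n, (⟪an n, uu⟫ : ℝ) - cg ≤ gra n := by
      intro n
      have hyti := young (g k) (an n) uu
      rw [hgra n, ← EReal.coe_toReal hgu hgu', ← hcg, ← EReal.coe_sub,
        EReal.coe_le_coe_iff] at hyti
      exact hyti
    have hY2 : ∀ n, (⟪an n, ww⟫ : ℝ) - cΨ ≤ ψ k (an n) := by
      intro n
      have hyti := young Ψ (an n) ww
      have hΨval : Ψ (an n) = ((ψ k (an n) : ℝ) : EReal) := rfl
      rw [hΨval, ← EReal.coe_toReal hΨw hΨw', ← hcΨ, ← EReal.coe_sub,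
        EReal.coe_le_coe_iff] at hyti
      exact hyti
    have hY3 : ∀ n, (⟪bn n, zz⟫ : ℝ) - ch ≤ hrb n := by
      intro n
      have hyti := young (h k) (bn n) zz
      rw [hhrb n, ← EReal.coe_toReal hhz hhz', ← hch, ← EReal.coe_sub,
        EReal.coe_le_coe_iff] at hyti
      exact hyti
    -- bounded data
    have hbd1 : BddAbove (Set.range (fun n => (p n).2)) := ht.bddAbove_range
    have hbd2 : BddAbove (Set.range (fun n => -(⟪(p n).1, zz⟫ : ℝ))) := by
      have : Filter.Tendsto (fun n => -(⟪(p n).1, zz⟫ : ℝ)) Filter.atTop (nhds (-⟪x, zz⟫)) :=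
        (hx.inner tendsto_const_nhds).neg
      exact this.bddAbove_range
    obtain ⟨C1, hC1⟩ := hbd1
    obtain ⟨C2, hC2⟩ := hbd2
    refine ⟨c * (C1 + C2 + cg + cΨ + ch), fun n => ?_⟩
    have hdn : (⟪an n, d⟫ : ℝ) ≤ C1 + C2 + cg + cΨ + ch := by
      have hbnz : (⟪bn n, zz⟫ : ℝ) = ⟪(p n).1, zz⟫ - ⟪an n, zz⟫ := by
        rw [← hab n, inner_add_left]; ring
      have hdd : d = uu + ww - zz := by rw [huww, hpqz]
      have h5 : (⟪an n, d⟫ : ℝ) = ⟪an n, uu⟫ + ⟪an n, ww⟫ - ⟪an n, zz⟫ := by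
        rw [hdd, inner_sub_right, inner_add_right]
      have h6 := hsumr n
      have h7 := hC1 (Set.mem_range_self n)
      have h8 := hC2 (Set.mem_range_self n)
      have h9 := hY1 n; have h10 := hY2 n; have h11 := hY3 n
      rw [hbnz] at h11
      rw [h5]
      linarith
    have : (⟪an n, s⟫ : ℝ) = c * ⟪an n, d⟫ := by
      rw [← hcd, real_inner_smul_right]
    rw [this]
    exact mul_le_mul_of_nonneg_left hdn (le_of_lt hcpos)
  have hbd : ∀ s ∈ S, ∃ Cb : ℝ, ∀ n, |(⟪an n, s⟫ : ℝ)| ≤ Cb := by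
    intro s hs
    obtain ⟨C1, hC1⟩ := hone s hs
    obtain ⟨C2, hC2⟩ := hone (-s) (neg_mem hs)
    refine ⟨max C1 C2, fun n => abs_le.mpr ⟨?_, le_trans (hC1 n) (le_max_left _ _)⟩⟩
    have := hC2 n
    rw [inner_neg_right] at this
    have : -C2 ≤ ⟪an n, s⟫ := by linarith
    exact le_trans (neg_le_neg (le_max_right C1 C2)) this
  -- Banach–Steinhaus: the projected sequence is bounded
  obtain ⟨M, hM0, hMb⟩ := proj_norm_bound S hSclosed an hbd
  set qn : ℕ → G k := fun n => an n - (S.orthogonalProjection (an n) : G k) with hqn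
  have hqnS : ∀ n, qn n ∈ Sᗮ := fun n => Submodule.sub_starProjection_mem_orthogonal _
  set a' : ℕ → G k := fun n => (S.orthogonalProjection (an n) : G k) with ha'
  set b' : ℕ → G k := fun n => bn n + qn n with hb'
  have ha'n : ∀ n, a' n = an n + (-(qn n)) := by
    intro n
    show (S.orthogonalProjection (an n) : G k)
        = an n + (-(an n - (S.orthogonalProjection (an n) : G k)))
    rw [neg_sub]
    abel
  have hab' : ∀ n, a' n + b' n = (p n).1 := by
    intro n
    rw [ha'n, ← hab n]
    show an n + -qn n + (bn n + qn n) = an n + bn n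
    abel
  have ha'bd : ∀ n, ‖a' n‖ ≤ M := hMb
  -- invariance computations
  have hkey : ∀ n, ∃ gr hr : ℝ, g k (a' n) = (gr : EReal) ∧ h k (b' n) = (hr : EReal) ∧
      gr + ψ k (a' n) + hr ≤ (p n).2 := by
    intro n
    have hinv_g : g k (a' n) = g k (an n) + ((⟪-(qn n), u₀⟫ : ℝ) : EReal) := by
      rw [ha'n n]
      exact invariance hgΓ hgdom (neg_mem (hqnS n)) (an n)
    have hinv_Ψ : Ψ (a' n) = Ψ (an n) + ((⟪-(qn n), w₀⟫ : ℝ) : EReal) := by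
      rw [ha'n n]
      exact invariance hΨΓ hΨdom (neg_mem (hqnS n)) (an n)
    have hinv_h : h k (b' n) = h k (bn n) + ((⟪qn n, z₀⟫ : ℝ) : EReal) := by
      rw [hb']
      exact invariance hhΓ hhdom (hqnS n) (bn n)
    have hψ' : ψ k (a' n) = ψ k (an n) - ⟪qn n, w₀⟫ := by
      have := hinv_Ψ
      rw [hΨdef] at this
      simp only [← EReal.coe_add, EReal.coe_eq_coe_iff] at this
      rw [inner_neg_left] at this
      linarith
    refine ⟨gra n - ⟪qn n, u₀⟫, hrb n + ⟪qn n, z₀⟫, ?_, ?_, ?_⟩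
    · rw [hinv_g, hgra n, inner_neg_left, ← EReal.coe_add]
      norm_cast
    · rw [hinv_h, hhrb n, ← EReal.coe_add]
    · have hzuw : (⟪qn n, z₀⟫ : ℝ) = ⟪qn n, u₀⟫ + ⟪qn n, w₀⟫ := by
        rw [hz₀eq, inner_add_right]
      rw [hψ', hzuw]
      have := hsumr n
      linarith
  -- weak compactness
  obtain ⟨φs, hφs, ainf, hweak⟩ := weak_compact a' M ha'bd
  -- weak convergence of b'
  have hx' : Filter.Tendsto (fun j => (p (φs j)).1) Filter.atTop (nhds x) :=
    hx.comp hφs.tendsto_atTop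
  have ht' : Filter.Tendsto (fun j => (p (φs j)).2) Filter.atTop (nhds t) :=
    ht.comp hφs.tendsto_atTop
  have hweakb : ∀ u : G k, Filter.Tendsto (fun j => (⟪b' (φs j), u⟫ : ℝ)) Filter.atTop
      (nhds ⟪x - ainf, u⟫) := by
    intro u
    have h1 : ∀ j, (⟪b' (φs j), u⟫ : ℝ) = ⟪(p (φs j)).1, u⟫ - ⟪a' (φs j), u⟫ := by
      intro j
      rw [← hab' (φs j)]
      simp only [inner_add_left]
      ring
    have h2 : Filter.Tendsto (fun j => (⟪(p (φs j)).1, u⟫ : ℝ) - ⟪a' (φs j), u⟫)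
        Filter.atTop (nhds (⟪x, u⟫ - ⟪ainf, u⟫)) :=
      (hx'.inner tendsto_const_nhds).sub (hweak u)
    rw [inner_sub_left ]
    simpa [h1] using h2
  -- weak lower semicontinuity
  have Hg : g k ainf ≤ Filter.liminf (fun j => g k (a' (φs j))) Filter.atTop :=
    weak_liminf hgΓ _ _ hweak
  have HΨ : Ψ ainf ≤ Filter.liminf (fun j => Ψ (a' (φs j))) Filter.atTop :=
    weak_liminf hΨΓ _ _ hweak
  have Hh : h k (x - ainf) ≤ Filter.liminf (fun j => h k (b' (φs j))) Filter.atTop :=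
    weak_liminf hhΓ _ _ hweakb
  -- the limit inequality
  have hsum : g k ainf + Ψ ainf + h k (x - ainf) ≤ (t : EReal) := by
    by_contra hcon
    push_neg at hcon
    obtain ⟨c, hc1, hc2⟩ := EReal.exists_between_coe_real hcon
    have hgb := hgΓ.2.2.2 ainf
    have hΨb : Ψ ainf ≠ ⊥ := by simp [hΨdef]
    have hhb := hhΓ.2.2.2 (x - ainf)
    obtain ⟨c12, c3, hc123, hlt12, hlt3⟩ := ereal_split (add_ne_bot' hgb hΨb) hhb hc2
    obtain ⟨c1, c2, hc12eq, hlt1, hlt2⟩ := ereal_split hgb hΨb hlt12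
    have he1 : ∀ᶠ j in Filter.atTop, (c1 : EReal) < g k (a' (φs j)) :=
      eventually_lt_of_lt_liminf (lt_of_lt_of_le hlt1 Hg)
    have he2 : ∀ᶠ j in Filter.atTop, (c2 : EReal) < Ψ (a' (φs j)) :=
      eventually_lt_of_lt_liminf (lt_of_lt_of_le hlt2 HΨ)
    have he3 : ∀ᶠ j in Filter.atTop, (c3 : EReal) < h k (b' (φs j)) :=
      eventually_lt_of_lt_liminf (lt_of_lt_of_le hlt3 Hh)
    have hev : ∀ᶠ j in Filter.atTop, c ≤ (p (φs j)).2 := by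
      filter_upwards [he1, he2, he3] with j h1 h2 h3
      obtain ⟨gr, hr, hgr, hhr, hle⟩ := hkey (φs j)
      rw [hgr] at h1
      rw [hhr] at h3
      rw [EReal.coe_lt_coe_iff] at h1 h3
      have h2' : c2 < ψ k (a' (φs j)) := by
        rw [hΨdef] at h2
        exact EReal.coe_lt_coe_iff.mp h2
      have : c < gr + ψ k (a' (φs j)) + hr := by
        rw [← hc123, ← hc12eq]
        linarith
      linarith
    have : c ≤ t := ge_of_tendsto ht' hev
    have : (c : EReal) ≤ (t : EReal) := EReal.coe_le_coe_iff.mpr this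
    exact absurd (lt_of_le_of_lt this hc1) (lt_irrefl _)
  -- construct the decomposition of the limit point
  have hhb := hhΓ.2.2.2 (x - ainf)
  have hhtop : h k (x - ainf) ≠ ⊤ := by
    intro htop
    rw [htop] at hsum
    rw [EReal.add_top_of_ne_bot (add_ne_bot' (hgΓ.2.2.2 ainf) (by simp [hΨdef]))] at hsum
    exact (not_le.mpr (EReal.coe_lt_top t)) hsum
  set hrv : ℝ := (h k (x - ainf)).toReal with hhrv
  have hhval : h k (x - ainf) = (hrv : EReal) := (EReal.coe_toReal hhtop hhb).symm
  have hF1 : g k ainf + Ψ ainf ≤ ((t - hrv : ℝ) : EReal) := by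
    apply ereal_le_sub_of_add_le
    rw [← hhval]
    exact hsum
  refine Set.mem_add.mpr ⟨(ainf, t - hrv), hF1, (x - ainf, hrv), le_of_eq hhval, ?_⟩
  have : ainf + (x - ainf) = x := by abel
  rw [Prod.ext_iff]
  constructor
  · simpa using this
  · simp


end
end

section
/- Let 𝒦 be a real Hilbert space, let I be a nonempty finite set, let (I_n)_{n∈ℕ} be nonempty subsets of I, let P ∈ ℕ, and let (x_n)_{n∈ℕ} be a sequence in 𝒦 with Σ_{n∈ℕ}‖x_{n+1} − x_n‖² < ∞. Suppose I_0 = I and ⋃_{j=n}^{n+P} I_j = I for every n ∈ ℕ. Let T ∈ ℕ, let i ∈ I, and let (π_i(n))_{n∈ℕ} be a sequence in ℕ with n − T ≤ π_i(n) ≤ n for all n. Define θ̄_i(n) = max{j ∈ ℕ : j ≤ n and i ∈ I_j} and θ_i(n) = π_i(θ̄_i(n)). Then x_{θ_i(n)} − x_n → 0 strongly as n → ∞. -/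
/-!
Statement 18: Lemma on vanishing of delayed differences.  If `Σ ‖xₙ₊₁ − xₙ‖² < ∞`,
the blocks `(Iₙ)` satisfy `I₀ = I` and `⋃_{j=n}^{n+P} I_j = I`, and the delays satisfy
`n − T ≤ πᵢ(n) ≤ n`, then `x_{θᵢ(n)} − xₙ → 0`, where
`θ̄ᵢ(n) = max {j ≤ n : i ∈ I_j}` and `θᵢ(n) = πᵢ(θ̄ᵢ(n))`.
-/

open Filter

noncomputable section

/-- Vanishing of delayed differences along the block structure. -/
theorem delayed_differences_tendsto_zero {𝒦 : Type*} [NormedAddCommGroup 𝒦]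
    [InnerProductSpace ℝ 𝒦]
    {I : Type*} [Fintype I] [Nonempty I]
    (Iblk : ℕ → Set I) (hIne : ∀ n, (Iblk n).Nonempty) (P : ℕ)
    (x : ℕ → 𝒦) (hsum : Summable fun n => ‖x (n + 1) - x n‖ ^ 2)
    (hI0 : Iblk 0 = Set.univ)
    (hcover : ∀ n, ⋃ j ∈ Set.Icc n (n + P), Iblk j = Set.univ)
    (T : ℕ) (i : I) (π : ℕ → ℕ) (hπ : ∀ n, n - T ≤ π n ∧ π n ≤ n) :
    Tendsto (fun n => x (π (sSup {j | j ≤ n ∧ i ∈ Iblk j})) - x n) atTop (nhds 0) := by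
  set d : ℕ → ℝ := fun n => ‖x (n + 1) - x n‖ with hd_def
  have hd0 : ∀ n, 0 ≤ d n := fun n => norm_nonneg _
  -- d tends to 0
  have hd2 : Tendsto (fun n => d n ^ 2) atTop (nhds 0) := hsum.tendsto_atTop_zero
  have hd : Tendsto d atTop (nhds 0) := by
    have : Tendsto (fun n => Real.sqrt (d n ^ 2)) atTop (nhds (Real.sqrt 0)) :=
      (Real.continuous_sqrt.tendsto 0).comp hd2
    simpa [Real.sqrt_sq (hd0 _)] using this
  set C := P + T with hC
  set S : ℕ → Set ℕ := fun n => {j | j ≤ n ∧ i ∈ Iblk j} with hS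
  have hSne : ∀ n, (S n).Nonempty := fun n =>
    ⟨0, Nat.zero_le n, by rw [hI0]; trivial⟩
  have hSbdd : ∀ n, BddAbove (S n) := fun n => ⟨n, fun j hj => hj.1⟩
  have hsup_le : ∀ n, sSup (S n) ≤ n := fun n => csSup_le (hSne n) (fun j hj => hj.1)
  have hsup_ge : ∀ n, P ≤ n → n - P ≤ sSup (S n) := by
    intro n hn
    have : (i : I) ∈ ⋃ j ∈ Set.Icc (n - P) (n - P + P), Iblk j := by
      rw [hcover]; trivial
    simp only [Set.mem_iUnion] at this
    obtain ⟨j, hj, hij⟩ := this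
    rw [Set.mem_Icc] at hj
    have hjn : j ≤ n := by omega
    exact hj.1.trans (le_csSup (hSbdd n) ⟨hjn, hij⟩)
  -- the comparison function
  set g : ℕ → ℝ := fun n => ∑ j ∈ Finset.range C, d (n - C + j) with hg
  have hgtendsto : Tendsto g atTop (nhds 0) := by
    have : Tendsto (fun n => ∑ j ∈ Finset.range C, d (n - C + j)) atTop
        (nhds (∑ j ∈ Finset.range C, (0 : ℝ))) := by
      apply tendsto_finset_sum
      intro j _
      apply hd.comp
      apply tendsto_atTop_atTop.mpr
      intro b
      exact ⟨b + C, fun n hn => by omega⟩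
    simpa using this
  rw [tendsto_zero_iff_norm_tendsto_zero]
  apply squeeze_zero' (Filter.Eventually.of_forall fun n => norm_nonneg _)
  · filter_upwards [eventually_ge_atTop C] with n hn
    set m := π (sSup (S n)) with hm
    have hmn : m ≤ n := (hπ _).2.trans (hsup_le n)
    have hmC : n - C ≤ m := by
      have h1 := hsup_ge n (by omega)
      have h2 := (hπ (sSup (S n))).1
      omega
    have htel : x n - x m = ∑ k ∈ Finset.Ico m n, (x (k + 1) - x k) := by
      rw [Finset.sum_Ico_eq_sub _ hmn, Finset.sum_range_sub, Finset.sum_range_sub]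
      abel
    have hb1 : ‖x m - x n‖ ≤ ∑ k ∈ Finset.Ico m n, d k := by
      rw [norm_sub_rev, htel]
      exact norm_sum_le _ _
    have hb2 : ∑ k ∈ Finset.Ico m n, d k ≤ ∑ k ∈ Finset.Ico (n - C) n, d k := by
      apply Finset.sum_le_sum_of_subset_of_nonneg
      · apply Finset.Ico_subset_Ico_left hmC
      · intro k _ _; exact hd0 k
    have hb3 : ∑ k ∈ Finset.Ico (n - C) n, d k = g n := by
      rw [Finset.sum_Ico_eq_sum_range]
      rw [Nat.sub_sub_self hn]
    calc ‖x m - x n‖ ≤ ∑ k ∈ Finset.Ico m n, d k := hb1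
      _ ≤ ∑ k ∈ Finset.Ico (n - C) n, d k := hb2
      _ = g n := hb3
  · exact hgtendsto

end
end
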